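/- arXiv:0903.2406 — 5 statements merged into one kernel-verified Lean document; each statement's English description precedes it below -/
import Mathlib

section
/- For the group G = N_{2,n}(R), the center Z(G) equals the commutator subgroup [G,G], and both consist exactly of the elements of the form ((0),(γ_{ij})). -/
abbrev Idx (n : ℕ) := {p : Fin n × Fin n // p.1 < p.2}

/-- `N_{2,n}(R)`: tuples `((α_i)_{1≤i≤n}, (γ_{ij})_{1≤i<j≤n})` over `R`. -/
def N2 (R : Type*) (n : ℕ) := (Fin n → R) × (Idx n → R)

variable {R : Type*} [Ring R] {n : ℕ}

/-- The group structure with multiplication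
`((α_i),(γ_{ij}))·((β_i),(γ'_{ij})) = ((α_i+β_i),(γ_{ij}+γ'_{ij}+α_i β_j))`. -/
instance N2.instGroup : Group (N2 R n) where
  mul x y := (x.1 + y.1, fun p => x.2 p + y.2 p + x.1 p.1.1 * y.1 p.1.2)
  one := (0, fun _ => 0)
  inv x := (-x.1, fun p => x.1 p.1.1 * x.1 p.1.2 - x.2 p)
  mul_assoc a b c := by
    refine Prod.ext ?_ ?_
    · show a.1 + b.1 + c.1 = a.1 + (b.1 + c.1)
      rw [add_assoc]
    · funext p
      show a.2 p + b.2 p + (a.1 p.1.1 * b.1 p.1.2) + c.2 p + (a.1 + b.1) p.1.1 * c.1 p.1.2 = _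
      show _ = a.2 p + (b.2 p + c.2 p + b.1 p.1.1 * c.1 p.1.2) + a.1 p.1.1 * (b.1 + c.1) p.1.2
      simp only [Pi.add_apply]
      noncomm_ring
  one_mul a := by
    refine Prod.ext ?_ ?_
    · show 0 + a.1 = a.1; simp
    · funext p
      show 0 + a.2 p + (0:Fin n → R) p.1.1 * a.1 p.1.2 = a.2 p
      simp
  mul_one a := by
    refine Prod.ext ?_ ?_
    · show a.1 + 0 = a.1; simp
    · funext p
      show a.2 p + 0 + a.1 p.1.1 * (0:Fin n → R) p.1.2 = a.2 p
      simp
  inv_mul_cancel a := by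
    refine Prod.ext ?_ ?_
    · show -a.1 + a.1 = 0; simp
    · funext p
      show (a.1 p.1.1 * a.1 p.1.2 - a.2 p) + a.2 p + (-a.1) p.1.1 * a.1 p.1.2 = 0
      simp

/-- `g_i^α`: the element with `α` in the `i`-th coordinate and `0` elsewhere. -/
def gi (i : Fin n) (a : R) : N2 R n := (Pi.single i a, 0)

/-- `g_{ij}^γ`: the element with `γ` in the `(i,j)` coordinate and `0` elsewhere. -/
def gij (p : Idx n) (c : R) : N2 R n := (0, Pi.single p c)

section Aux

open scoped commutatorElement

lemma N2.mul_def (x y : N2 R n) :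
    x * y = (x.1 + y.1, fun p => x.2 p + y.2 p + x.1 p.1.1 * y.1 p.1.2) := rfl

lemma N2.inv_def (x : N2 R n) :
    x⁻¹ = (-x.1, fun p => x.1 p.1.1 * x.1 p.1.2 - x.2 p) := rfl

lemma N2.one_def : (1 : N2 R n) = (0, fun _ => 0) := rfl

set_option maxRecDepth 10000 in
set_option maxHeartbeats 1600000 in
lemma N2.commutator_gi (i j : Fin n) (hij : i < j) (a b : R) :
    ⁅gi i a, gi j b⁆ = gij ⟨(i, j), hij⟩ (a * b) := by
  have hne : i ≠ j := ne_of_lt hij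
  refine Prod.ext ?_ ?_
  · show (Pi.single i a + Pi.single j b) + -(Pi.single i a) + -(Pi.single j b) = (0 : Fin n → R)
    abel
  · funext p
    obtain ⟨⟨p1, p2⟩, hp⟩ := p
    rw [commutatorElement_def, N2.mul_def, N2.mul_def, N2.mul_def, N2.inv_def, N2.inv_def]
    simp only [commutatorElement_def, gi, gij, N2.mul_def, N2.inv_def, Pi.add_apply,
      Pi.neg_apply, Pi.zero_apply, Pi.single_apply, Subtype.mk.injEq, Prod.mk.injEq]
    split_ifs
    all_goals try (exfalso; tauto)
    all_goals try noncomm_ring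
    all_goals try (exfalso; subst_vars; exact hne rfl)
    all_goals try (exfalso; subst_vars; exact absurd hp (lt_asymm hij))
    all_goals try (exfalso; subst_vars; exact absurd hp (lt_irrefl _))

lemma N2.gij_mem_commutator (p : Idx n) (c : R) :
    gij p c ∈ commutator (N2 R n) := by
  obtain ⟨⟨i, j⟩, hij⟩ := p
  have h : gij ⟨(i, j), hij⟩ c = ⁅gi i c, gi j (1 : R)⁆ := by
    rw [N2.commutator_gi i j hij c 1, mul_one]
  rw [h, commutator_def]
  exact Subgroup.commutator_mem_commutator (Subgroup.mem_top _) (Subgroup.mem_top _)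

def N2.ofSnd (γ : Idx n → R) : N2 R n := (0, γ)

lemma N2.ofSnd_zero : (N2.ofSnd 0 : N2 R n) = 1 := by
  refine Prod.ext rfl ?_
  funext p
  rfl

lemma N2.ofSnd_add (c d : Idx n → R) :
    (N2.ofSnd (c + d) : N2 R n) = N2.ofSnd c * N2.ofSnd d := by
  refine Prod.ext ?_ ?_
  · show (0 : Fin n → R) = 0 + 0; simp
  · funext p
    show c p + d p = c p + d p + (0 : Fin n → R) p.1.1 * (0 : Fin n → R) p.1.2
    simp

lemma N2.sum_single_mem_commutator (γ : Idx n → R) (s : Finset (Idx n)) :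
    (N2.ofSnd (∑ p ∈ s, Pi.single p (γ p)) : N2 R n) ∈ commutator (N2 R n) := by
  classical
  induction s using Finset.induction_on with
  | empty =>
    rw [Finset.sum_empty, N2.ofSnd_zero]
    exact Subgroup.one_mem _
  | insert q s h ih =>
    rw [Finset.sum_insert h, N2.ofSnd_add]
    have hg : (N2.ofSnd (Pi.single q (γ q)) : N2 R n) = gij q (γ q) := rfl
    rw [hg]
    exact Subgroup.mul_mem _ (N2.gij_mem_commutator q (γ q)) ih

lemma N2.snd_mem_commutator (γ : Idx n → R) :
    (N2.ofSnd γ : N2 R n) ∈ commutator (N2 R n) := by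
  classical
  have h := N2.sum_single_mem_commutator γ (Finset.univ)
  rwa [Finset.univ_sum_single] at h

lemma N2.mem_center_iff (hn : 2 ≤ n) (x : N2 R n) :
    x ∈ Subgroup.center (N2 R n) ↔ x.1 = 0 := by
  rw [Subgroup.mem_center_iff]
  constructor
  · intro h
    funext i
    have key : ∀ (p : Idx n) (y : N2 R n),
        y.1 p.1.1 * x.1 p.1.2 = x.1 p.1.1 * y.1 p.1.2 := by
      intro p y
      have h2 := congrArg (fun z => z.2 p) (h y)
      simp only [N2.mul_def] at h2
      have h3 : x.2 p + y.2 p + (y.1 p.1.1 * x.1 p.1.2)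
          = x.2 p + y.2 p + (x.1 p.1.1 * y.1 p.1.2) := by
        calc x.2 p + y.2 p + (y.1 p.1.1 * x.1 p.1.2)
            = y.2 p + x.2 p + y.1 p.1.1 * x.1 p.1.2 := by abel
          _ = x.2 p + y.2 p + x.1 p.1.1 * y.1 p.1.2 := h2
      exact add_left_cancel h3
    by_cases hi : i.val + 1 < n
    · set j : Fin n := ⟨i.val + 1, hi⟩ with hj
      have hij : i < j := by simp [hj, Fin.lt_def]
      have hne : i ≠ j := ne_of_lt hij
      have h4 := key ⟨(i, j), hij⟩ (gi j 1)
      simp only [gi] at h4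
      rw [Pi.single_eq_of_ne hne, Pi.single_eq_same] at h4
      show x.1 i = (0 : Fin n → R) i
      simp only [Pi.zero_apply]
      calc x.1 i = x.1 i * 1 := (mul_one _).symm
        _ = 0 * x.1 j := h4.symm
        _ = 0 := zero_mul _
    · push_neg at hi
      have hi1 : 1 ≤ i.val := by have := i.isLt; omega
      have h0 : (0 : ℕ) < n := by omega
      set z : Fin n := ⟨0, h0⟩ with hz
      have hzi : z < i := by simp [hz, Fin.lt_def]; omega
      have hne : z ≠ i := ne_of_lt hzi
      have h4 := key ⟨(z, i), hzi⟩ (gi z 1)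
      simp only [gi] at h4
      rw [Pi.single_eq_same, Pi.single_eq_of_ne hne.symm] at h4
      show x.1 i = (0 : Fin n → R) i
      simp only [Pi.zero_apply]
      calc x.1 i = 1 * x.1 i := (one_mul _).symm
        _ = x.1 z * 0 := h4
        _ = 0 := mul_zero _
  · intro hx y
    refine Prod.ext ?_ ?_
    · show y.1 + x.1 = x.1 + y.1
      rw [add_comm]
    · funext p
      show y.2 p + x.2 p + y.1 p.1.1 * x.1 p.1.2
          = x.2 p + y.2 p + x.1 p.1.1 * y.1 p.1.2
      rw [hx]
      simp only [Pi.zero_apply, mul_zero, zero_mul, add_zero]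
      rw [add_comm]

end Aux

/-- for `G = N_{2,n}(R)`, the center equals the commutator subgroup,
and both consist exactly of the elements of the form `((0),(γ_{ij}))`. -/
theorem stmt_2 (R : Type*) [Ring R] (n : ℕ) (hn : 2 ≤ n) :
    Subgroup.center (N2 R n) = commutator (N2 R n) ∧
    (Subgroup.center (N2 R n) : Set (N2 R n)) = {x : N2 R n | x.1 = 0} := by
  have hset : (Subgroup.center (N2 R n) : Set (N2 R n)) = {x : N2 R n | x.1 = 0} := by
    ext x
    exact N2.mem_center_iff hn x
  refine ⟨?_, hset⟩
  apply le_antisymm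
  · intro x hx
    have hx1 : x.1 = 0 := (N2.mem_center_iff hn x).mp hx
    have hx2 : x = N2.ofSnd x.2 := Prod.ext hx1 rfl
    rw [hx2]
    exact N2.snd_mem_commutator x.2
  · rw [commutator_def]
    rw [Subgroup.commutator_le]
    intro g _ h _
    rw [N2.mem_center_iff hn]
    show g.1 + h.1 + -g.1 + -h.1 = 0
    abel
end

section
/- In G = N_{2,n}(R) with G_i = C_G(g_i), each G_i is abelian, and for any 1 ≤ i < j ≤ n one has [G_i, G_j] = [g_i, G_j] = [G_i, g_j]. -/
variable {R : Type*} [Ring R] {n : ℕ}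

open scoped commutatorElement

lemma N2.gi_fst (k : Fin n) (a : R) (l : Fin n) (hl : l ≠ k) : (gi k a).1 l = 0 := by
  show (Pi.single k a : Fin n → R) l = 0
  exact Pi.single_eq_of_ne (M := fun _ => R) hl a

lemma N2.gi_fst_same (k : Fin n) (a : R) : (gi k a).1 k = a := by
  show (Pi.single k a : Fin n → R) k = a
  exact Pi.single_eq_same (M := fun _ => R) k a

lemma N2.commutator_eq (x y : N2 R n) :
    ⁅x, y⁆ = ((0 : Fin n → R),
      fun p => x.1 p.1.1 * y.1 p.1.2 - y.1 p.1.1 * x.1 p.1.2) := by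
  show x * y * x⁻¹ * y⁻¹ = _
  rw [N2.mul_def (x * y * x⁻¹), N2.mul_def (x * y), N2.mul_def x y, N2.inv_def, N2.inv_def]
  refine Prod.ext ?_ ?_
  · show x.1 + y.1 + -x.1 + -y.1 = 0
    abel
  · funext p
    simp only [Pi.add_apply, Pi.neg_apply]
    noncomm_ring

lemma N2.mem_centralizer_iff (k : Fin n) (x : N2 R n) :
    x ∈ Subgroup.centralizer {gi k (1 : R)} ↔ ∀ l, l ≠ k → x.1 l = 0 := by
  rw [Subgroup.mem_centralizer_iff]
  simp only [Set.mem_singleton_iff, forall_eq]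
  constructor
  · intro hc l hl
    have key : ∀ p : Idx n,
        (gi k (1:R)).1 p.1.1 * x.1 p.1.2 = x.1 p.1.1 * (gi k (1:R)).1 p.1.2 := by
      intro p
      have h2 := congrFun (congrArg Prod.snd hc) p
      rw [N2.mul_def, N2.mul_def] at h2
      simp only at h2
      have h3 : (gi k (1:R)).2 p = 0 := rfl
      rw [h3, zero_add, add_zero] at h2
      exact add_left_cancel h2
    rcases lt_or_gt_of_ne hl with hlt | hgt
    · have e := key ⟨(l, k), hlt⟩
      simp only at e
      rw [N2.gi_fst k 1 l hl, N2.gi_fst_same, zero_mul, mul_one] at e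
      exact e.symm
    · have e := key ⟨(k, l), hgt⟩
      simp only at e
      rw [N2.gi_fst_same, N2.gi_fst k 1 l hl, one_mul, mul_zero] at e
      exact e
  · intro hx
    rw [N2.mul_def, N2.mul_def]
    refine Prod.ext (add_comm _ _) ?_
    funext p
    simp only
    have h3 : (gi k (1:R)).2 p = 0 := rfl
    rw [h3, zero_add, add_zero]
    by_cases hk : p.1.1 = k
    · have h2 : p.1.2 ≠ k := fun hh => absurd (hh ▸ hk ▸ p.2) (lt_irrefl _)
      rw [hx p.1.2 h2, N2.gi_fst k 1 p.1.2 h2, mul_zero, mul_zero]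
    · rw [hx p.1.1 hk, N2.gi_fst k 1 p.1.1 hk, zero_mul, zero_mul]

lemma N2.gi_mem_centralizer (k : Fin n) (a : R) :
    gi k a ∈ Subgroup.centralizer {gi k (1 : R)} := by
  rw [N2.mem_centralizer_iff]
  exact fun l hl => N2.gi_fst k a l hl

lemma N2.commutator_special {i j : Fin n} (h : i < j) (x y : N2 R n)
    (hx : ∀ l, l ≠ i → x.1 l = 0) (hy : ∀ l, l ≠ j → y.1 l = 0) :
    ⁅x, y⁆ = gij ⟨(i, j), h⟩ (x.1 i * y.1 j) := by
  rw [N2.commutator_eq]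
  refine Prod.ext rfl ?_
  funext p
  show x.1 p.1.1 * y.1 p.1.2 - y.1 p.1.1 * x.1 p.1.2
      = (Pi.single ⟨(i, j), h⟩ (x.1 i * y.1 j) : Idx n → R) p
  by_cases hp : p = ⟨(i, j), h⟩
  · subst hp
    rw [Pi.single_eq_same, hy i (ne_of_lt h), zero_mul, sub_zero]
  · rw [Pi.single_eq_of_ne hp]
    have hterm2 : y.1 p.1.1 * x.1 p.1.2 = 0 := by
      by_cases h1 : p.1.1 = j
      · have h2 : p.1.2 ≠ i := by
          intro hh
          have hplt := p.2
          rw [h1, hh] at hplt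
          exact absurd (h.trans hplt) (lt_irrefl _)
        rw [hx p.1.2 h2, mul_zero]
      · rw [hy p.1.1 h1, zero_mul]
    have hterm1 : x.1 p.1.1 * y.1 p.1.2 = 0 := by
      by_cases h1 : p.1.1 = i
      · by_cases h2 : p.1.2 = j
        · exact absurd (Subtype.ext (Prod.ext h1 h2)) hp
        · rw [hy p.1.2 h2, mul_zero]
      · rw [hx p.1.1 h1, zero_mul]
    rw [hterm1, hterm2, sub_zero]

lemma N2.gij_mul (p : Idx n) (a b : R) : gij p a * gij p b = gij (R := R) p (a + b) := by
  rw [N2.mul_def]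
  refine Prod.ext ?_ ?_
  · show (0 : Fin n → R) + 0 = 0
    simp
  · funext q
    show (Pi.single p a : Idx n → R) q + (Pi.single p b : Idx n → R) q
          + (0 : Fin n → R) q.1.1 * (0 : Fin n → R) q.1.2
        = (Pi.single p (a + b) : Idx n → R) q
    by_cases hq : q = p
    · subst hq
      simp [Pi.single_eq_same]
    · simp [Pi.single_eq_of_ne hq]

/-- The subgroup `{g_{ij}^c : c ∈ R}`. -/
def N2.T (p : Idx n) : Subgroup (N2 R n) where
  carrier := Set.range (gij p)
  one_mem' := ⟨0, by
    rw [gij]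
    refine Prod.ext rfl ?_
    show (Pi.single p 0 : Idx n → R) = fun _ => (0 : R)
    funext q
    by_cases hq : q = p
    · subst hq; simp
    · simp [Pi.single_eq_of_ne hq]⟩
  mul_mem' := by
    rintro _ _ ⟨a, rfl⟩ ⟨b, rfl⟩
    exact ⟨a + b, (N2.gij_mul p a b).symm⟩
  inv_mem' := by
    rintro _ ⟨a, rfl⟩
    refine ⟨-a, ?_⟩
    rw [N2.inv_def]
    refine Prod.ext ?_ ?_
    · show (0 : Fin n → R) = -(gij p a).1
      show (0 : Fin n → R) = -(0 : Fin n → R)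
      simp
    · funext q
      show (Pi.single p (-a) : Idx n → R) q
          = (0 : Fin n → R) q.1.1 * (0 : Fin n → R) q.1.2 - (Pi.single p a : Idx n → R) q
      by_cases hq : q = p
      · subst hq; simp
      · simp [Pi.single_eq_of_ne hq]

/-- each `G_i = C_G(g_i)` is abelian, and for `i < j`,
`[G_i,G_j] = [g_i,G_j] = [G_i,g_j]` (the latter two being the subgroups generated
by the commutators `[g_i,y]`, `y ∈ G_j`, resp. `[x,g_j]`, `x ∈ G_i`). -/
theorem stmt_7 (R : Type*) [Ring R] (n : ℕ) (hn : 2 ≤ n) (i j : Fin n) (h : i < j) :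
    (∀ k : Fin n, ∀ x ∈ Subgroup.centralizer {gi k (1 : R)},
        ∀ y ∈ Subgroup.centralizer {gi k (1 : R)}, Commute x y) ∧
    ⁅Subgroup.centralizer {gi i (1 : R)}, Subgroup.centralizer {gi j (1 : R)}⁆ =
      Subgroup.closure {z : N2 R n |
        ∃ y ∈ Subgroup.centralizer {gi j (1 : R)}, z = ⁅gi i (1 : R), y⁆} ∧
    ⁅Subgroup.centralizer {gi i (1 : R)}, Subgroup.centralizer {gi j (1 : R)}⁆ =
      Subgroup.closure {z : N2 R n |
        ∃ x ∈ Subgroup.centralizer {gi i (1 : R)}, z = ⁅x, gi j (1 : R)⁆} := by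

  have hcs : ∀ (a b : R),
      ⁅gi i a, gi j b⁆ = gij (R := R) ⟨(i, j), h⟩ (a * b) := by
    intro a b
    rw [N2.commutator_special h (gi i a) (gi j b) (N2.gi_fst i a) (N2.gi_fst j b),
      N2.gi_fst_same, N2.gi_fst_same]
  have habel : ∀ k : Fin n, ∀ x ∈ Subgroup.centralizer {gi k (1 : R)},
      ∀ y ∈ Subgroup.centralizer {gi k (1 : R)}, Commute x y := by
    intro k x hx y hy
    rw [N2.mem_centralizer_iff] at hx hy
    show x * y = y * x
    rw [N2.mul_def, N2.mul_def]
    refine Prod.ext (add_comm _ _) ?_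
    funext p
    simp only
    have hcross : ∀ u v : N2 R n, (∀ l, l ≠ k → u.1 l = 0) → (∀ l, l ≠ k → v.1 l = 0) →
        u.1 p.1.1 * v.1 p.1.2 = 0 := by
      intro u v hu hv
      by_cases h1 : p.1.1 = k
      · have h2 : p.1.2 ≠ k := fun hh => absurd (hh ▸ h1 ▸ p.2) (lt_irrefl _)
        rw [hv p.1.2 h2, mul_zero]
      · rw [hu p.1.1 h1, zero_mul]
    rw [hcross x y hx hy, hcross y x hy hx, add_zero, add_zero, add_comm]
  have h1 : ⁅Subgroup.centralizer {gi i (1 : R)}, Subgroup.centralizer {gi j (1 : R)}⁆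
      = N2.T ⟨(i, j), h⟩ := by
    apply le_antisymm
    · rw [Subgroup.commutator_le]
      intro x hx y hy
      rw [N2.mem_centralizer_iff] at hx hy
      exact ⟨_, (N2.commutator_special h x y hx hy).symm⟩
    · rintro _ ⟨c, rfl⟩
      have e : gij ⟨(i, j), h⟩ c = ⁅gi i (1 : R), gi j c⁆ := by rw [hcs, one_mul]
      rw [e]
      exact Subgroup.commutator_mem_commutator (N2.gi_mem_centralizer i 1)
        (N2.gi_mem_centralizer j c)
  refine ⟨habel, ?_, ?_⟩
  · rw [h1]
    apply le_antisymm
    · rintro _ ⟨c, rfl⟩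
      apply Subgroup.subset_closure
      exact ⟨gi j c, N2.gi_mem_centralizer j c, by rw [hcs, one_mul]⟩
    · rw [Subgroup.closure_le]
      rintro _ ⟨y, hy, rfl⟩
      rw [N2.mem_centralizer_iff] at hy
      exact ⟨_, (N2.commutator_special h (gi i 1) y (N2.gi_fst i 1) hy).symm⟩
  · rw [h1]
    apply le_antisymm
    · rintro _ ⟨c, rfl⟩
      apply Subgroup.subset_closure
      exact ⟨gi i c, N2.gi_mem_centralizer i c, by rw [hcs, mul_one]⟩
    · rw [Subgroup.closure_le]
      rintro _ ⟨x, hx, rfl⟩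
      rw [N2.mem_centralizer_iff] at hx
      exact ⟨_, (N2.commutator_special h x (gi j 1) hx (N2.gi_fst j 1)).symm⟩
end

section
/- In G = N_{2,n}(R), for any 1 ≤ i < j ≤ n the intersection C_G(g_i) ∩ C_G(g_j) equals the center Z(G). -/
variable {R : Type*} [Ring R] {n : ℕ}

lemma N2.mul_comm_iff (x y : N2 R n) :
    x * y = y * x ↔ ∀ p : Idx n, x.1 p.1.1 * y.1 p.1.2 = y.1 p.1.1 * x.1 p.1.2 := by
  constructor
  · intro hxy p
    have h2 : x.2 p + y.2 p + x.1 p.1.1 * y.1 p.1.2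
        = y.2 p + x.2 p + y.1 p.1.1 * x.1 p.1.2 :=
      congrFun (congrArg Prod.snd hxy) p
    have := h2
    rw [add_comm (x.2 p) (y.2 p), add_assoc, add_assoc] at this
    exact add_left_cancel (add_left_cancel this)
  · intro hc
    refine Prod.ext ?_ ?_
    · show x.1 + y.1 = y.1 + x.1
      exact add_comm _ _
    · funext p
      show x.2 p + y.2 p + x.1 p.1.1 * y.1 p.1.2 = y.2 p + x.2 p + y.1 p.1.1 * x.1 p.1.2
      rw [hc p, add_comm (x.2 p) (y.2 p)]

/-- for `i < j`, `C_G(g_i) ∩ C_G(g_j) = Z(G)` in `G = N_{2,n}(R)`. -/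
theorem stmt_8 (R : Type*) [Ring R] (n : ℕ) (hn : 2 ≤ n) (i j : Fin n) (h : i < j) :
    Subgroup.centralizer {gi i (1 : R)} ⊓ Subgroup.centralizer {gi j (1 : R)} =
      Subgroup.center (N2 R n) := by
  ext x
  simp only [Subgroup.mem_inf, Subgroup.mem_centralizer_iff, Set.mem_singleton_iff,
    forall_eq, Subgroup.mem_center_iff]
  constructor
  · rintro ⟨h1, h2⟩ y
    rw [N2.mul_comm_iff] at h1 h2 ⊢
    have key : ∀ k : Fin n, x.1 k = 0 := by
      intro k
      rcases lt_trichotomy k j with hk | hk | hk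
      · have := h2 ⟨(k, j), hk⟩
        simpa [gi, Pi.single_apply, hk.ne] using this.symm
      · subst hk
        have := h1 ⟨(i, k), h⟩
        simpa [gi, Pi.single_apply, h.ne'] using this
      · have := h2 ⟨(j, k), hk⟩
        simpa [gi, Pi.single_apply, hk.ne'] using this
    intro p
    simp [key]
  · intro hx
    exact ⟨hx _, hx _⟩
end

section
/- The set X of tuples ((α_i),(γ_{ij})) over R with the twisted multiplication ((α_i),(γ_{ij})) ⊙ ((β_i),(γ'_{ij})) = ((α_i+β_i),(γ_{ij}+γ'_{ij}+α_i β_j + Σ_{k=1}^n f^k_{ij}(α_k, β_k))) forms a group, for any symmetric 2-cocycles f^k : R⁺ × R⁺ → ⊕_{i<j} R⁺. -/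
/-- A symmetric 2-cocycle `f : R⁺ × R⁺ → ⊕_{1≤i<j≤n} R⁺`, with components `f_{ij}`. -/
structure SymCocycle (R : Type*) [Ring R] (n : ℕ) where
  f : R → R → Idx n → R
  zero_left : ∀ x, f 0 x = 0
  zero_right : ∀ x, f x 0 = 0
  cocycle : ∀ x y z, f (x + y) z + f x y = f x (y + z) + f y z
  symm : ∀ x y, f x y = f y x

/-- The twisted multiplication
`((α_i),(γ_{ij})) ⊙ ((β_i),(γ'_{ij})) =
  ((α_i+β_i),(γ_{ij}+γ'_{ij}+α_i β_j + Σ_{k=1}^n f^k_{ij}(α_k,β_k)))`. -/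
def qmul {R : Type*} [Ring R] {n : ℕ} (F : Fin n → SymCocycle R n)
    (x y : (Fin n → R) × (Idx n → R)) : (Fin n → R) × (Idx n → R) :=
  (x.1 + y.1, fun p =>
    x.2 p + y.2 p + x.1 p.1.1 * y.1 p.1.2 + ∑ k : Fin n, (F k).f (x.1 k) (y.1 k) p)

/-- for any symmetric 2-cocycles `f¹, …, fⁿ`, the set `X` of tuples
`((α_i),(γ_{ij}))` over `R` with the twisted multiplication `⊙` forms a group. -/
theorem stmt_10 (R : Type*) [Ring R] (n : ℕ) (hn : 2 ≤ n)
    (F : Fin n → SymCocycle R n) :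
    ∃ G : Group ((Fin n → R) × (Idx n → R)),
      ∀ x y : (Fin n → R) × (Idx n → R), G.mul x y = qmul F x y := by
  letI : One ((Fin n → R) × (Idx n → R)) := ⟨((0 : Fin n → R), (0 : Idx n → R))⟩
  letI : Mul ((Fin n → R) × (Idx n → R)) := ⟨qmul F⟩
  letI : Inv ((Fin n → R) × (Idx n → R)) :=
    ⟨fun x => (-x.1, fun p => -x.2 p + x.1 p.1.1 * x.1 p.1.2
        - ∑ k : Fin n, (F k).f (-(x.1 k)) (x.1 k) p)⟩
  refine ⟨Group.ofLeftAxioms ?_ ?_ ?_, fun x y => rfl⟩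
  · intro a b c
    show qmul F (qmul F a b) c = qmul F a (qmul F b c)
    refine Prod.ext ?_ ?_
    · show a.1 + b.1 + c.1 = a.1 + (b.1 + c.1); rw [add_assoc]
    · funext p
      have key : ∑ k : Fin n, ((F k).f (a.1 k + b.1 k) (c.1 k) p
            + (F k).f (a.1 k) (b.1 k) p)
          = ∑ k : Fin n, ((F k).f (a.1 k) (b.1 k + c.1 k) p
            + (F k).f (b.1 k) (c.1 k) p) := by
        refine Finset.sum_congr rfl fun k _ => ?_
        have := congrFun ((F k).cocycle (a.1 k) (b.1 k) (c.1 k)) p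
        simpa using this
      simp only [qmul, Pi.add_apply, add_mul, mul_add, Finset.sum_add_distrib] at key ⊢
      have key' : ∑ k : Fin n, (F k).f (a.1 k + b.1 k) (c.1 k) p
          = ∑ k : Fin n, (F k).f (a.1 k) (b.1 k + c.1 k) p
            + ∑ k : Fin n, (F k).f (b.1 k) (c.1 k) p
            - ∑ k : Fin n, (F k).f (a.1 k) (b.1 k) p := by
        rw [eq_sub_iff_add_eq]; exact key
      rw [key']
      abel
  · intro a
    show qmul F ((0 : Fin n → R), (0 : Idx n → R)) a = a
    refine Prod.ext ?_ ?_
    · show (0 : Fin n → R) + a.1 = a.1; simp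
    · funext p
      simp [qmul, (F _).zero_left]
  · intro a
    show qmul F a⁻¹ a = 1
    refine Prod.ext ?_ ?_
    · show -a.1 + a.1 = 0; simp
    · funext p
      show (-a.2 p + a.1 p.1.1 * a.1 p.1.2
          - ∑ k : Fin n, (F k).f (-(a.1 k)) (a.1 k) p) + a.2 p
          + (-a.1) p.1.1 * a.1 p.1.2
          + ∑ k : Fin n, (F k).f ((-a.1) k) (a.1 k) p = 0
      simp only [Pi.neg_apply, neg_mul]
      abel
end

section
/- Let A and B be torsion-free abelian groups and f, g ∈ Z²(B,A) with f − g a symmetric 2-cocycle. Then the central extensions E(f) and E(g) of A by B are elementarily equivalent. -/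
/-- A 2-cocycle `f : B × B → A` on abelian groups (not necessarily symmetric). -/
structure Cocycle2 (B A : Type*) [AddCommGroup B] [AddCommGroup A] where
  f : B → B → A
  zero_left : ∀ x, f 0 x = 0
  zero_right : ∀ x, f x 0 = 0
  cocycle : ∀ x y z, f (x + y) z + f x y = f x (y + z) + f y z

/-- The underlying set `B × A` of the central extension `E(f)` of `A` by `B`
determined by the 2-cocycle `f`. -/
def CExt {B A : Type*} [AddCommGroup B] [AddCommGroup A] (_c : Cocycle2 B A) := B × A

variable {B A : Type*} [AddCommGroup B] [AddCommGroup A]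

/-- The central extension `E(f)`: multiplication
`(b₁,a₁)(b₂,a₂) = (b₁+b₂, a₁+a₂+f(b₁,b₂))`. -/
instance CExt.instGroup (c : Cocycle2 B A) : Group (CExt c) where
  mul x y := (x.1 + y.1, x.2 + y.2 + c.f x.1 y.1)
  one := (0, 0)
  inv x := (-x.1, -x.2 - c.f x.1 (-x.1))
  mul_assoc a b d := by
    refine Prod.ext ?_ ?_
    · show a.1 + b.1 + d.1 = a.1 + (b.1 + d.1); rw [add_assoc]
    · show a.2 + b.2 + c.f a.1 b.1 + d.2 + c.f (a.1 + b.1) d.1 =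
        a.2 + (b.2 + d.2 + c.f b.1 d.1) + c.f a.1 (b.1 + d.1)
      have h := c.cocycle a.1 b.1 d.1
      calc a.2 + b.2 + c.f a.1 b.1 + d.2 + c.f (a.1 + b.1) d.1
          = a.2 + b.2 + d.2 + (c.f (a.1 + b.1) d.1 + c.f a.1 b.1) := by abel
        _ = a.2 + b.2 + d.2 + (c.f a.1 (b.1 + d.1) + c.f b.1 d.1) := by rw [h]
        _ = a.2 + (b.2 + d.2 + c.f b.1 d.1) + c.f a.1 (b.1 + d.1) := by abel
  one_mul a := by
    refine Prod.ext ?_ ?_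
    · show 0 + a.1 = a.1; simp
    · show 0 + a.2 + c.f 0 a.1 = a.2; simp [c.zero_left]
  mul_one a := by
    refine Prod.ext ?_ ?_
    · show a.1 + 0 = a.1; simp
    · show a.2 + 0 + c.f a.1 0 = a.2; simp [c.zero_right]
  inv_mul_cancel a := by
    refine Prod.ext ?_ ?_
    · show -a.1 + a.1 = 0; simp
    · show -a.2 - c.f a.1 (-a.1) + a.2 + c.f (-a.1) a.1 = 0
      have h := c.cocycle a.1 (-a.1) a.1
      simp [c.zero_left, c.zero_right] at h
      rw [h]; abel
open FirstOrder

/-- Function symbols of the language of groups: a constant `1`, a unary `⁻¹`,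
a binary `*`. -/
def grpFun : ℕ → Type
  | 0 => Unit
  | 1 => Unit
  | 2 => Unit
  | _ => Empty

/-- The first-order language of groups. -/
def Lgrp : Language := ⟨grpFun, fun _ => Empty⟩

/-- Every group is an `Lgrp`-structure in the natural way. -/
instance grpStructure (G : Type*) [Group G] : Lgrp.Structure G where
  funMap {n} f x :=
    match n, f, x with
    | 0, _, _ => 1
    | 1, _, x => (x 0)⁻¹
    | 2, _, x => x 0 * x 1
    | (_ + 3), f, _ => f.elim
  RelMap {n} r _ := r.elim

/-- Old Mathlib `AddMonoid.IsTorsionFree` (removed): no nonzero element has finite additive order. -/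
def AddMonoid.IsTorsionFree (G : Type*) [AddMonoid G] : Prop :=
  ∀ g : G, g ≠ 0 → ¬IsOfFinAddOrder g



open FirstOrder Filter

section TFLemmas

theorem tf_zsmul {G : Type*} [AddCommGroup G] (h : AddMonoid.IsTorsionFree G) {n : ℤ}
    (hn : n ≠ 0) {x : G} (hx : n • x = 0) : x = 0 := by
  by_contra hx0
  refine h x hx0 (isOfFinAddOrder_iff_nsmul_eq_zero.2 ⟨n.natAbs, Int.natAbs_pos.2 hn, ?_⟩)
  rcases Int.natAbs_eq n with hn' | hn'
  · have : ((n.natAbs : ℤ)) • x = 0 := by rw [← hn']; exact hx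
    simpa using this
  · have : ((n.natAbs : ℤ)) • x = 0 := by
      have : (-(n.natAbs : ℤ)) • x = 0 := by rw [← hn']; exact hx
      rw [neg_smul, neg_eq_zero] at this; exact this
    simpa using this

end TFLemmas

section TWdef

variable {B A : Type*} [AddCommGroup B] [AddCommGroup A]

/-- The difference of two 2-cocycles, as a 2-cocycle. -/
def hco (f g : Cocycle2 B A) : Cocycle2 B A where
  f x y := f.f x y - g.f x y
  zero_left x := by show f.f 0 x - g.f 0 x = 0; rw [f.zero_left, g.zero_left, sub_zero]
  zero_right x := by show f.f x 0 - g.f x 0 = 0; rw [f.zero_right, g.zero_right, sub_zero]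
  cocycle x y z := by
    show f.f (x+y) z - g.f (x+y) z + (f.f x y - g.f x y)
      = f.f x (y+z) - g.f x (y+z) + (f.f y z - g.f y z)
    rw [sub_add_sub_comm, f.cocycle x y z, g.cocycle x y z, sub_add_sub_comm]

/-- Type synonym for `B × A` carrying the abelian group structure twisted by a
symmetric 2-cocycle. -/
def TW (_h : Cocycle2 B A) (_hs : ∀ x y, _h.f x y = _h.f y x) : Type _ := B × A

variable {h : Cocycle2 B A} {hs : ∀ x y, h.f x y = h.f y x}

instance TW.instZero (h : Cocycle2 B A) (hs : ∀ x y, h.f x y = h.f y x) : Zero (TW h hs) :=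
  ⟨((0 : B), (0 : A))⟩

instance TW.instAdd (h : Cocycle2 B A) (hs : ∀ x y, h.f x y = h.f y x) : Add (TW h hs) :=
  ⟨fun x y => (x.1 + y.1, x.2 + y.2 + h.f x.1 y.1)⟩

instance TW.instNeg (h : Cocycle2 B A) (hs : ∀ x y, h.f x y = h.f y x) : Neg (TW h hs) :=
  ⟨fun x => (-x.1, -x.2 - h.f x.1 (-x.1))⟩

instance TW.instAddCommGroup (h : Cocycle2 B A) (hs : ∀ x y, h.f x y = h.f y x) :
    AddCommGroup (TW h hs) where
  add := (· + ·)
  zero := 0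
  neg := Neg.neg
  nsmul := nsmulRec
  zsmul := zsmulRec
  add_assoc a b d := by
    refine Prod.ext ?_ ?_
    · show a.1 + b.1 + d.1 = a.1 + (b.1 + d.1); rw [add_assoc]
    · show a.2 + b.2 + h.f a.1 b.1 + d.2 + h.f (a.1 + b.1) d.1 =
        a.2 + (b.2 + d.2 + h.f b.1 d.1) + h.f a.1 (b.1 + d.1)
      have hc := h.cocycle a.1 b.1 d.1
      calc a.2 + b.2 + h.f a.1 b.1 + d.2 + h.f (a.1 + b.1) d.1
          = a.2 + b.2 + d.2 + (h.f (a.1 + b.1) d.1 + h.f a.1 b.1) := by abel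
        _ = a.2 + b.2 + d.2 + (h.f a.1 (b.1 + d.1) + h.f b.1 d.1) := by rw [hc]
        _ = a.2 + (b.2 + d.2 + h.f b.1 d.1) + h.f a.1 (b.1 + d.1) := by abel
  zero_add a := by
    refine Prod.ext ?_ ?_
    · show 0 + a.1 = a.1; simp
    · show 0 + a.2 + h.f 0 a.1 = a.2; simp [h.zero_left]
  add_zero a := by
    refine Prod.ext ?_ ?_
    · show a.1 + 0 = a.1; simp
    · show a.2 + 0 + h.f a.1 0 = a.2; simp [h.zero_right]
  neg_add_cancel a := by
    refine Prod.ext ?_ ?_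
    · show -a.1 + a.1 = 0; simp
    · show -a.2 - h.f a.1 (-a.1) + a.2 + h.f (-a.1) a.1 = 0
      have hc := h.cocycle a.1 (-a.1) a.1
      simp [h.zero_left, h.zero_right] at hc
      rw [hs (-a.1) a.1, hc]; abel
  add_comm a b := by
    refine Prod.ext ?_ ?_
    · show a.1 + b.1 = b.1 + a.1; rw [add_comm]
    · show a.2 + b.2 + h.f a.1 b.1 = b.2 + a.2 + h.f b.1 a.1
      rw [hs a.1 b.1, add_comm a.2 b.2]

theorem TW.add_def (x y : TW h hs) : x + y = (x.1 + y.1, x.2 + y.2 + h.f x.1 y.1) := rfl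

theorem TW.zero_def : (0 : TW h hs) = ((0 : B), (0 : A)) := rfl

/-- First projection as a homomorphism. -/
def twFst (h : Cocycle2 B A) (hs : ∀ x y, h.f x y = h.f y x) : TW h hs →+ B where
  toFun x := x.1
  map_zero' := rfl
  map_add' x y := rfl

/-- Inclusion of `A` as a homomorphism. -/
def twIota (h : Cocycle2 B A) (hs : ∀ x y, h.f x y = h.f y x) : A →+ TW h hs where
  toFun a := ((0 : B), a)
  map_zero' := rfl
  map_add' a a' := by
    refine (Prod.ext ?_ ?_).symm
    · show (0 : B) + 0 = 0; simp
    · show a + a' + h.f 0 0 = a + a'; simp [h.zero_left]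

theorem twIota_injective : Function.Injective (twIota h hs) := by
  intro a a' hee
  have := congrArg Prod.snd hee
  exact this

theorem tw_fst_eq_zero {x : TW h hs} (hx : x.1 = 0) : x = twIota h hs x.2 := by
  refine Prod.ext ?_ rfl
  exact hx

theorem tw_torsionFree (hA : AddMonoid.IsTorsionFree A) (hB : AddMonoid.IsTorsionFree B)
    (x : TW h hs) (n : ℤ) (hn : n ≠ 0) (hx : n • x = 0) : x = 0 := by
  have h1 : n • x.1 = 0 := by
    have := (twFst h hs).map_zsmul n x
    rw [hx] at this
    exact ((twFst h hs).map_zero ▸ this).symm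
  have hx1 : x.1 = 0 := tf_zsmul hB hn h1
  have hxi : x = twIota h hs x.2 := tw_fst_eq_zero hx1
  have h2 : twIota h hs (n • x.2) = 0 := by
    rw [(twIota h hs).map_zsmul, ← hxi, hx]
  have : n • x.2 = 0 := twIota_injective (by rw [h2, (twIota h hs).map_zero])
  rw [hxi, tf_zsmul hA hn this, (twIota h hs).map_zero]

end TWdef

section StarDef

variable {G H : Type*} [AddCommGroup G] [AddCommGroup H]

/-- A fixed nonprincipal ultrafilter on `ℕ`. -/
noncomputable def UF : Ultrafilter ℕ := Filter.hyperfilter ℕ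

theorem UF_ge (N : ℕ) : ∀ᶠ i in (UF : Filter ℕ), N ≤ i :=
  Nat.hyperfilter_le_atTop (Filter.mem_atTop N)

/-- The subgroup of functions vanishing almost everywhere. -/
def aeZ (G : Type*) [AddCommGroup G] : AddSubgroup (ℕ → G) where
  carrier := {w | ∀ᶠ i in (UF : Filter ℕ), w i = 0}
  add_mem' := by
    intro a b ha hb
    filter_upwards [ha, hb] with i h1 h2
    show a i + b i = 0
    rw [h1, h2, add_zero]
  zero_mem' := Filter.Eventually.of_forall fun i => rfl
  neg_mem' := by
    intro a ha
    filter_upwards [ha] with i h1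
    show -a i = 0
    rw [h1, neg_zero]

/-- The ultrapower of `G`. -/
def UPow (G : Type*) [AddCommGroup G] : Type _ := (ℕ → G) ⧸ aeZ G

noncomputable instance : AddCommGroup (UPow G) :=
  QuotientAddGroup.Quotient.addCommGroup (aeZ G)

/-- Projection onto the ultrapower. -/
noncomputable def mkS : (ℕ → G) →+ UPow G := QuotientAddGroup.mk' (aeZ G)

theorem mkS_surjective : Function.Surjective (mkS (G := G)) :=
  QuotientAddGroup.mk'_surjective _

theorem mkS_eq_iff {w w' : ℕ → G} :
    mkS w = mkS w' ↔ ∀ᶠ i in (UF : Filter ℕ), w i = w' i := by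
  show QuotientAddGroup.mk' (aeZ G) w = QuotientAddGroup.mk' (aeZ G) w' ↔ _
  rw [QuotientAddGroup.mk'_eq_mk']
  constructor
  · rintro ⟨z, hz, rfl⟩
    filter_upwards [hz] with i h1
    show w i = w i + z i
    rw [h1, add_zero]
  · intro hee
    refine ⟨w' - w, ?_, by abel⟩
    filter_upwards [hee] with i h1
    show w' i - w i = 0
    rw [h1, sub_self]

theorem mkS_eq_zero_iff {w : ℕ → G} :
    mkS w = 0 ↔ ∀ᶠ i in (UF : Filter ℕ), w i = 0 := by
  rw [show (0 : UPow G) = mkS 0 from (map_zero _).symm, mkS_eq_iff]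
  rfl

theorem star_tf (hG : ∀ (x : G) (n : ℤ), n ≠ 0 → n • x = 0 → x = 0) :
    ∀ (x : UPow G) (n : ℤ), n ≠ 0 → n • x = 0 → x = 0 := by
  intro x n hn hx
  obtain ⟨w, rfl⟩ := mkS_surjective x
  rw [← map_zsmul] at hx
  rw [mkS_eq_zero_iff] at hx ⊢
  filter_upwards [hx] with i h1
  exact hG (w i) n hn h1

/-- Functoriality of the ultrapower. -/
noncomputable def starMap (φ : G →+ H) : UPow G →+ UPow H :=
  QuotientAddGroup.map (aeZ G) (aeZ H)
    { toFun := fun w i => φ (w i)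
      map_zero' := funext fun i => φ.map_zero
      map_add' := fun a b => funext fun i => φ.map_add _ _ }
    (by
      intro w hw
      show ∀ᶠ i in (UF : Filter ℕ), φ (w i) = 0
      filter_upwards [hw] with i h1
      rw [show w i = 0 from h1, φ.map_zero])

theorem starMap_mk (φ : G →+ H) (w : ℕ → G) :
    starMap φ (mkS w) = mkS (fun i => φ (w i)) := rfl

end StarDef

section TWStar

variable {B A : Type*} [AddCommGroup B] [AddCommGroup A]
variable (h : Cocycle2 B A) (hs : ∀ x y, h.f x y = h.f y x)

/-- The ultrapower of the first projection. -/
noncomputable def piS : UPow (TW h hs) →+ UPow B := starMap (twFst h hs)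

/-- The (image of the) ultrapower of `A` inside the ultrapower of the extension,
as a `ℤ`-submodule. -/
noncomputable def KK : Submodule ℤ (UPow (TW h hs)) :=
  AddSubgroup.toIntSubmodule (piS h hs).ker

theorem mem_KK_iff {x : UPow (TW h hs)} : x ∈ KK h hs ↔ piS h hs x = 0 := Iff.rfl

theorem piS_mk (w : ℕ → TW h hs) : piS h hs (mkS w) = mkS (fun i => (w i).1) := rfl

theorem mk_mem_KK_iff {w : ℕ → TW h hs} :
    mkS w ∈ KK h hs ↔ ∀ᶠ i in (UF : Filter ℕ), (w i).1 = 0 := by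
  rw [mem_KK_iff, piS_mk, mkS_eq_zero_iff]

theorem KK_quot_tf (hB : AddMonoid.IsTorsionFree B) :
    ∀ (x : UPow (TW h hs)) (n : ℤ), n ≠ 0 → n • x ∈ KK h hs → x ∈ KK h hs := by
  intro x n hn hx
  rw [mem_KK_iff] at hx ⊢
  rw [map_zsmul] at hx
  exact star_tf (fun b m hm hb => tf_zsmul hB hm hb) _ n hn hx

theorem SX_tf (hA : AddMonoid.IsTorsionFree A) (hB : AddMonoid.IsTorsionFree B) :
    ∀ (x : UPow (TW h hs)) (n : ℤ), n ≠ 0 → n • x = 0 → x = 0 :=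
  star_tf (tw_torsionFree hA hB)

theorem cond_iff {wz : ℕ → TW h hs} {yv : UPow (TW h hs)} {u : ℕ → TW h hs}
    (hu : mkS u = yv) {d : ℤ} :
    (∃ k ∈ KK h hs, mkS wz - yv = d • k) ↔
      ∀ᶠ i in (UF : Filter ℕ), ∃ a : A, wz i - u i = d • twIota h hs a := by
  constructor
  · rintro ⟨k, hk, hzk⟩
    obtain ⟨κ, rfl⟩ := mkS_surjective k
    rw [mk_mem_KK_iff] at hk
    rw [← hu, ← map_sub, ← map_zsmul] at hzk
    have hzz := mkS_eq_iff.1 hzk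
    filter_upwards [hk, hzz] with i h1 h2
    refine ⟨(κ i).2, ?_⟩
    have : κ i = twIota h hs (κ i).2 := tw_fst_eq_zero h1
    have h2' : wz i - u i = d • κ i := h2
    rw [← this]
    exact h2'
  · intro hee
    classical
    set κ : ℕ → TW h hs := fun i =>
      if hc : ∃ a : A, wz i - u i = d • twIota h hs a then twIota h hs hc.choose else 0 with hκ
    refine ⟨mkS κ, ?_, ?_⟩
    · rw [mk_mem_KK_iff]
      refine Filter.Eventually.of_forall fun i => ?_
      by_cases hc : ∃ a : A, wz i - u i = d • twIota h hs a
      · simp only [hκ, dif_pos hc]; rfl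
      · simp only [hκ, dif_neg hc]; rfl
    · rw [← hu, ← map_sub, ← map_zsmul]
      apply mkS_eq_iff.2
      filter_upwards [hee] with i h1
      show wz i - u i = d • κ i
      rw [hκ]
      simp only [dif_pos h1]
      exact h1.choose_spec

theorem KK_compact (P : ℕ → Prop) (d : ℕ → ℤ) (y : ℕ → UPow (TW h hs))
    (hfin : ∀ N, ∃ z, ∀ n ≤ N, P n → ∃ k ∈ KK h hs, z - y n = d n • k) :
    ∃ z, ∀ n, P n → ∃ k ∈ KK h hs, z - y n = d n • k := by
  classical
  choose u hu using fun n => mkS_surjective (y n)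
  choose zf hz using hfin
  choose wN hwN using fun N => mkS_surjective (zf N)
  set E : ℕ → Set ℕ := fun N => {i | N ≤ i ∧
    ∀ n, n ≤ N → P n → ∃ a : A, wN N i - u n i = d n • twIota h hs a} with hEdef
  have hE : ∀ N, ∀ᶠ i in (UF : Filter ℕ), i ∈ E N := by
    intro N
    have h2 : ∀ᶠ i in (UF : Filter ℕ), ∀ n ∈ Finset.range (N+1), P n →
        ∃ a : A, wN N i - u n i = d n • twIota h hs a := by
      rw [Filter.eventually_all_finset]
      intro n hn
      by_cases hP : P n
      · have hcc := hz N n (Nat.lt_succ_iff.1 (Finset.mem_range.1 hn)) hP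
        rw [← hwN N] at hcc
        exact ((cond_iff h hs (hu n)).1 hcc).mono fun i hi _ => hi
      · exact Filter.Eventually.of_forall fun i hP' => absurd hP' hP
    filter_upwards [UF_ge N, h2] with i hi1 hi2
    exact ⟨hi1, fun n hn hP => hi2 n (Finset.mem_range.2 (Nat.lt_succ_of_le hn)) hP⟩
  set sel : ℕ → ℕ := fun i => Nat.findGreatest (fun N => i ∈ E N) i with hseldef
  set wz : ℕ → TW h hs := fun i => wN (sel i) i with hwzdef
  refine ⟨mkS wz, fun n hP => ?_⟩
  rw [cond_iff h hs (hu n)]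
  filter_upwards [hE n] with i hi
  have hn_le : n ≤ i := hi.1
  have hsel_ge : n ≤ sel i := Nat.le_findGreatest (P := fun N => i ∈ E N) hn_le hi
  have hspec : i ∈ E (sel i) := Nat.findGreatest_spec (P := fun N => i ∈ E N) hn_le hi
  exact hspec.2 n hsel_ge hP

end TWStar

section Core

variable {M : Type*} [AddCommGroup M]

theorem fg_of_le_fg {V W : Submodule ℤ M} (hV : V.FG) (hle : W ≤ V) : W.FG := by
  haveI : IsNoetherian ℤ ↥V := isNoetherian_of_fg_of_noetherian V hV
  have h1 : (Submodule.comap V.subtype W).FG := IsNoetherian.noetherian _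
  have h2 : W = Submodule.map V.subtype (Submodule.comap V.subtype W) := by
    rw [Submodule.map_comap_eq, Submodule.range_subtype]
    exact (inf_eq_right.2 hle).symm
  rw [h2]
  exact h1.map _

variable (K : Submodule ℤ M)

/-- Goodness: finitely generated partial splittings compatible with `φ` exist. -/
def GoodP (φ : M →ₗ.[ℤ] M) : Prop :=
  ∀ V : Submodule ℤ M, V.FG → ∃ ψ : ↥V →ₗ[ℤ] M, (∀ v, ψ v ∈ K) ∧
    ∀ (v : ↥V) (hv : (v : M) ∈ φ.domain), ψ v = φ ⟨v, hv⟩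

/-- The partial retractions onto `K` that are "good". -/
def GoodSet : Set (M →ₗ.[ℤ] M) :=
  {φ | K ≤ φ.domain ∧ (∀ x : φ.domain, φ x ∈ K) ∧
    (∀ x : φ.domain, (x : M) ∈ K → φ x = x) ∧ GoodP K φ}

theorem base_psi (hquo : ∀ (x : M) (n : ℤ), n ≠ 0 → n • x ∈ K → x ∈ K)
    (V : Submodule ℤ M) (hV : V.FG) :
    ∃ ψ : ↥V →ₗ[ℤ] M, (∀ v, ψ v ∈ K) ∧ ∀ v : ↥V, (v : M) ∈ K → ψ v = (v : M) := by
  haveI : Module.Finite ℤ ↥V := Module.Finite.iff_fg.2 hV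
  set W : Submodule ℤ ↥V := Submodule.comap V.subtype K with hW
  haveI : NoZeroSMulDivisors ℤ (↥V ⧸ W) := by
    constructor
    intro n q hq
    by_cases hn : n = 0
    · exact Or.inl hn
    refine Or.inr ?_
    obtain ⟨v, rfl⟩ := Submodule.Quotient.mk_surjective W q
    rw [← Submodule.Quotient.mk_smul, Submodule.Quotient.mk_eq_zero] at hq
    rw [Submodule.Quotient.mk_eq_zero]
    have hmem : n • (v : M) ∈ K := by
      have : ((n • v : ↥V) : M) ∈ K := hq
      simpa using this
    exact Submodule.mem_comap.2 (hquo _ n hn hmem)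
  haveI : Module.Free ℤ (↥V ⧸ W) := Module.free_of_finite_type_torsion_free'
  obtain ⟨σ, hσ⟩ := Module.projective_lifting_property W.mkQ LinearMap.id W.mkQ_surjective
  refine ⟨V.subtype ∘ₗ (LinearMap.id - σ ∘ₗ W.mkQ), ?_, ?_⟩
  · intro v
    have hmq : W.mkQ (v - σ (W.mkQ v)) = 0 := by
      have h1 : W.mkQ (σ (W.mkQ v)) = W.mkQ v := congrArg (fun t => t (W.mkQ v)) hσ
      rw [map_sub, h1, sub_self]
    have : v - σ (W.mkQ v) ∈ W := (Submodule.Quotient.mk_eq_zero W).1 hmq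
    exact this
  · intro v hv
    have hvW : v ∈ W := Submodule.mem_comap.2 hv
    have : W.mkQ v = 0 := (Submodule.Quotient.mk_eq_zero W).2 hvW
    simp [this]

theorem base_mem (hquo : ∀ (x : M) (n : ℤ), n ≠ 0 → n • x ∈ K → x ∈ K) :
    (⟨K, K.subtype⟩ : M →ₗ.[ℤ] M) ∈ GoodSet K := by
  refine ⟨le_rfl, fun x => x.2, fun x _ => rfl, ?_⟩
  intro V hV
  obtain ⟨ψ, h1, h2⟩ := base_psi K hquo V hV
  exact ⟨ψ, h1, fun v hv => h2 v hv⟩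

theorem exists_common {c : Set (M →ₗ.[ℤ] M)} (hdir : DirectedOn (· ≤ ·) c)
    {y : M →ₗ.[ℤ] M} (hy : y ∈ c) (s : Finset M)
    (hall : ∀ w ∈ s, ∃ f ∈ c, w ∈ f.domain) : ∃ f ∈ c, ∀ w ∈ s, w ∈ f.domain := by
  classical
  induction s using Finset.induction with
  | empty => exact ⟨y, hy, by simp⟩
  | @insert w s hw ih =>
    obtain ⟨f1, hf1, hws⟩ := ih fun v hv => hall v (Finset.mem_insert_of_mem hv)
    obtain ⟨f2, hf2, hw2⟩ := hall w (Finset.mem_insert_self w s)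
    obtain ⟨f3, hf3, h13, h23⟩ := hdir f1 hf1 f2 hf2
    refine ⟨f3, hf3, ?_⟩
    intro v hv
    rcases Finset.mem_insert.1 hv with rfl | hv
    · exact h23.1 hw2
    · exact h13.1 (hws v hv)

theorem chain_ub (c : Set (M →ₗ.[ℤ] M)) (hsub : c ⊆ GoodSet K)
    (hchain : IsChain (· ≤ ·) c) (y : M →ₗ.[ℤ] M) (hy : y ∈ c) :
    ∃ ub ∈ GoodSet K, ∀ z ∈ c, z ≤ ub := by
  have hdir : DirectedOn (· ≤ ·) c := hchain.directedOn
  set ub := LinearPMap.sSup c hdir with hub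
  have hmemdom : ∀ z : M, z ∈ ub.domain → ∃ f ∈ c, z ∈ f.domain := by
    intro z hz
    have hz' : z ∈ sSup (LinearPMap.domain '' c) := hz
    have hne : (LinearPMap.domain '' c).Nonempty := ⟨y.domain, Set.mem_image_of_mem _ hy⟩
    have hdir' : DirectedOn (· ≤ ·) (LinearPMap.domain '' c) :=
      directedOn_image.2 (hdir.mono fun _ _ hle => hle.1)
    obtain ⟨W, ⟨f, hf, rfl⟩, hzW⟩ := (Submodule.mem_sSup_of_directed hne hdir').1 hz'
    exact ⟨f, hf, hzW⟩
  have hval : ∀ (f) (hf : f ∈ c) (z : ↥ub.domain) (hzf : (z : M) ∈ f.domain),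
      ub z = f ⟨z, hzf⟩ := by
    intro f hf z hzf
    have h1 := LinearPMap.sSup_apply hdir hf ⟨(z : M), hzf⟩
    exact (congrArg (fun t : ↥ub.domain => ub t)
      (Subtype.ext rfl : z = ⟨(z : M), (LinearPMap.le_sSup hdir hf).1 hzf⟩)).trans h1
  refine ⟨ub, ⟨?_, ?_, ?_, ?_⟩, fun z hz => LinearPMap.le_sSup hdir hz⟩
  · exact le_trans (hsub hy).1 (LinearPMap.le_sSup hdir hy).1
  · intro z
    obtain ⟨f, hf, hzf⟩ := hmemdom z z.2
    rw [hval f hf z hzf]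
    exact (hsub hf).2.1 _
  · intro z hzK
    obtain ⟨f, hf, hzf⟩ := hmemdom z z.2
    rw [hval f hf z hzf]
    exact (hsub hf).2.2.1 _ hzK
  · intro V hV
    have hVD : (V ⊓ ub.domain).FG := fg_of_le_fg hV inf_le_left
    obtain ⟨s, hs⟩ := hVD
    have hall : ∀ w ∈ s, ∃ f ∈ c, w ∈ f.domain := by
      intro w hw
      have : w ∈ V ⊓ ub.domain := hs ▸ Submodule.subset_span hw
      exact hmemdom w this.2
    obtain ⟨f, hf, hfall⟩ := exists_common hdir hy s hall
    have hVDf : V ⊓ ub.domain ≤ f.domain := by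
      rw [← hs]
      exact Submodule.span_le.2 fun w hw => hfall w hw
    obtain ⟨ψ, h1, h2⟩ := (hsub hf).2.2.2 V hV
    refine ⟨ψ, h1, ?_⟩
    intro v hv
    have hvf : (v : M) ∈ f.domain := hVDf ⟨v.2, hv⟩
    rw [h2 v hvf]
    exact (LinearPMap.le_sSup hdir hf).2 rfl

end Core

section Succ

variable {M : Type*} [AddCommGroup M] (K : Submodule ℤ M) (φ : M →ₗ.[ℤ] M) (x : M)

theorem xMem (V : Submodule ℤ M) : x ∈ Submodule.span ℤ {x} ⊔ V :=
  Submodule.mem_sup_left (Submodule.mem_span_singleton_self x)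

/-- The set of possible values at `x` of good partial splittings defined on
`span {x} ⊔ V` compatible with `φ`. -/
def SolS (V : Submodule ℤ M) : Set M :=
  {y | ∃ ψ : ↥(Submodule.span ℤ {x} ⊔ V) →ₗ[ℤ] M, (∀ v, ψ v ∈ K) ∧
    (∀ (v : ↥(Submodule.span ℤ {x} ⊔ V)) (hv : (v : M) ∈ φ.domain), ψ v = φ ⟨v, hv⟩) ∧
    ψ ⟨x, xMem x V⟩ = y}

theorem sol_nonempty (hgood : GoodP K φ) (V : Submodule ℤ M) (hV : V.FG) :
    (SolS K φ x V).Nonempty := by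
  obtain ⟨ψ, h1, h2⟩ := hgood _ ((Submodule.fg_span_singleton x).sup hV)
  exact ⟨ψ ⟨x, xMem x V⟩, ψ, h1, h2, rfl⟩

theorem sol_anti {V V' : Submodule ℤ M} (hle : V ≤ V') :
    SolS K φ x V' ⊆ SolS K φ x V := by
  rintro y ⟨ψ, h1, h2, h3⟩
  have hWle : Submodule.span ℤ {x} ⊔ V ≤ Submodule.span ℤ {x} ⊔ V' := sup_le_sup_left hle _
  refine ⟨ψ.comp (Submodule.inclusion hWle), fun v => h1 _, ?_, ?_⟩
  · intro v hv
    exact h2 (Submodule.inclusion hWle v) hv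
  · have heq : Submodule.inclusion hWle ⟨x, xMem x V⟩ = ⟨x, xMem x V'⟩ := Subtype.ext rfl
    show ψ (Submodule.inclusion hWle ⟨x, xMem x V⟩) = y
    rw [heq]
    exact h3

theorem sol_coset (htf : ∀ (z : M) (n : ℤ), n ≠ 0 → n • z = 0 → z = 0)
    (V : Submodule ℤ M) (hV : V.FG) :
    ∃ d : ℤ, (∀ y ∈ SolS K φ x V, ∀ y' ∈ SolS K φ x V, ∃ k ∈ K, y' - y = d • k) ∧
      (∀ y ∈ SolS K φ x V, ∀ k ∈ K, y + d • k ∈ SolS K φ x V) := by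
  classical
  set W : Submodule ℤ M := Submodule.span ℤ {x} ⊔ V with hWdef
  haveI : Module.Finite ℤ ↥W := Module.Finite.iff_fg.2 ((Submodule.fg_span_singleton x).sup hV)
  set N : Submodule ℤ ↥W := Submodule.comap W.subtype φ.domain with hNdef
  set T : Submodule ℤ (↥W ⧸ N) := Submodule.torsion ℤ (↥W ⧸ N) with hTdef
  haveI : Module.Finite ℤ ((↥W ⧸ N) ⧸ T) := inferInstance
  haveI : Module.Free ℤ ((↥W ⧸ N) ⧸ T) := Module.free_of_finite_type_torsion_free'
  set mkW : ↥W →ₗ[ℤ] ((↥W ⧸ N) ⧸ T) := T.mkQ ∘ₗ N.mkQ with hmkW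
  set xe : ↥W := ⟨x, xMem x V⟩ with hxe
  set xb : (↥W ⧸ N) ⧸ T := mkW xe with hxb
  set ev : (((↥W ⧸ N) ⧸ T) →ₗ[ℤ] ℤ) →ₗ[ℤ] ℤ :=
    { toFun := fun l => l xb
      map_add' := fun l1 l2 => rfl
      map_smul' := fun r l => rfl } with hev
  set J : Submodule ℤ ℤ := LinearMap.range ev with hJ
  haveI hJp : J.IsPrincipal := IsPrincipalIdealRing.principal J
  set d : ℤ := Submodule.IsPrincipal.generator J with hd
  -- every element of J is a multiple of d
  have hJd : ∀ a ∈ J, ∃ c : ℤ, a = c * d := by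
    intro a ha
    rw [← Submodule.IsPrincipal.span_singleton_generator J] at ha
    obtain ⟨c, hc⟩ := Submodule.mem_span_singleton.1 ha
    exact ⟨c, by rw [← hc]; rfl⟩
  -- xb = d • u
  have hxbu : ∃ u, d • u = xb := by
    set b := Module.Free.chooseBasis ℤ (((↥W ⧸ N) ⧸ T)) with hb
    have hcoord : ∀ i, b.repr xb i ∈ J := fun i => ⟨b.coord i, rfl⟩
    have hdvd : ∀ i, ∃ c : ℤ, b.repr xb i = c * d := fun i => hJd _ (hcoord i)
    refine ⟨∑ i, (hdvd i).choose • b i, ?_⟩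
    rw [Finset.smul_sum]
    have hterm : ∀ i ∈ Finset.univ, d • ((hdvd i).choose • b i) = b.repr xb i • b i := by
      intro i _
      rw [smul_smul, mul_comm, ← (hdvd i).choose_spec]
    rw [Finset.sum_congr rfl hterm]
    exact b.sum_repr xb
  obtain ⟨u, hu⟩ := hxbu
  have hdJ : d ∈ J := Submodule.IsPrincipal.generator_mem J
  obtain ⟨l₀, hl₀⟩ := hdJ
  refine ⟨d, ?_, ?_⟩
  · rintro y ⟨ψ, hψ1, hψ2, hψ3⟩ y' ⟨ψ', hψ'1, hψ'2, hψ'3⟩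
    set θ : ↥W →ₗ[ℤ] M := ψ' - ψ with hθ
    have hθN : N ≤ LinearMap.ker θ := by
      intro v hv
      have hvd : (v : M) ∈ φ.domain := hv
      have : θ v = ψ' v - ψ v := rfl
      rw [LinearMap.mem_ker, this, hψ'2 v hvd, hψ2 v hvd, sub_self]
    set θ1 : (↥W ⧸ N) →ₗ[ℤ] M := N.liftQ θ hθN with hθ1
    have hθ1val : ∀ q, θ1 q ∈ K := by
      intro q
      obtain ⟨v, rfl⟩ := Submodule.Quotient.mk_surjective N q
      rw [Submodule.liftQ_apply]
      show ψ' v - ψ v ∈ K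
      exact sub_mem (hψ'1 v) (hψ1 v)
    have hθ1T : T ≤ LinearMap.ker θ1 := by
      intro t ht
      obtain ⟨a, ha⟩ := (Submodule.mem_torsion_iff _).1 ht
      have ha' : ((a : ℤ)) • t = 0 := ha
      have h0 : (a : ℤ) • θ1 t = 0 := by rw [← map_smul, ha', map_zero]
      have hane : (a : ℤ) ≠ 0 := nonZeroDivisors.coe_ne_zero a
      exact LinearMap.mem_ker.2 (htf _ _ hane h0)
    set θ2 := T.liftQ θ1 hθ1T with hθ2
    have hθ2val : ∀ q, θ2 q ∈ K := by
      intro q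
      obtain ⟨t, rfl⟩ := Submodule.Quotient.mk_surjective T q
      rw [Submodule.liftQ_apply]
      exact hθ1val t
    refine ⟨θ2 u, hθ2val u, ?_⟩
    have h1 : θ2 xb = θ xe := by
      rw [hxb, hmkW]
      show θ2 (T.mkQ (N.mkQ xe)) = θ xe
      rw [Submodule.mkQ_apply, Submodule.mkQ_apply, Submodule.liftQ_apply,
        Submodule.liftQ_apply]
    have h2 : θ xe = y' - y := by
      show ψ' xe - ψ xe = y' - y
      rw [hψ'3, hψ3]
    rw [← hu, map_smul] at h1
    rw [← h2, ← h1]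
  · rintro y ⟨ψ, hψ1, hψ2, hψ3⟩ k hk
    set χ : ↥W →ₗ[ℤ] M := (LinearMap.toSpanSingleton ℤ M k).comp (l₀.comp mkW) with hχ
    have hχval : ∀ v, χ v = l₀ (mkW v) • k := fun v => rfl
    refine ⟨ψ + χ, ?_, ?_, ?_⟩
    · intro v
      rw [LinearMap.add_apply, hχval]
      exact add_mem (hψ1 v) (Submodule.smul_mem _ _ hk)
    · intro v hv
      have hvN : v ∈ N := hv
      have hmk0 : N.mkQ v = 0 := (Submodule.Quotient.mk_eq_zero N).2 hvN
      have hχ0 : χ v = 0 := by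
        rw [hχval, hmkW]
        show l₀ (T.mkQ (N.mkQ v)) • k = 0
        rw [hmk0, map_zero, map_zero, zero_smul]
      rw [LinearMap.add_apply, hχ0, add_zero]
      exact hψ2 v hv
    · rw [LinearMap.add_apply, hψ3, hχval]
      have : l₀ (mkW xe) = d := hl₀
      rw [← hxb] at this ⊢
      rw [this]

end Succ

section SuccStep

variable {M : Type*} [AddCommGroup M] (K : Submodule ℤ M)

theorem succ_step (htf : ∀ (z : M) (n : ℤ), n ≠ 0 → n • z = 0 → z = 0)
    (hcompact : ∀ (P : ℕ → Prop) (d : ℕ → ℤ) (y : ℕ → M),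
      (∀ N, ∃ z, ∀ n ≤ N, P n → ∃ k ∈ K, z - y n = d n • k) →
      ∃ z, ∀ n, P n → ∃ k ∈ K, z - y n = d n • k)
    (φ : M →ₗ.[ℤ] M) (x : M)
    (hφ : φ ∈ GoodSet K) (hx : x ∉ φ.domain) :
    ∃ φ' ∈ GoodSet K, φ ≤ φ' ∧ x ∈ φ'.domain := by
  classical
  obtain ⟨hKle, hKval, hKid, hgood⟩ := hφ
  set Cst : ℤ → Submodule ℤ M → Prop := fun d V =>
    (∀ y ∈ SolS K φ x V, ∀ y' ∈ SolS K φ x V, ∃ k ∈ K, y' - y = d • k) ∧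
    (∀ y ∈ SolS K φ x V, ∀ k ∈ K, y + d • k ∈ SolS K φ x V) with hCst
  have hCV : ∀ V : Submodule ℤ M, V.FG → ∃ d, Cst d V :=
    fun V hV => sol_coset K φ x htf V hV
  set e : ℕ ≃ ℤ := (Denumerable.eqv ℤ).symm with he
  set Pn : ℕ → Prop := fun n => ∃ V : Submodule ℤ M, V.FG ∧ Cst (e n) V with hPn
  set Vsel : ℕ → Submodule ℤ M := fun n => if hp : Pn n then hp.choose else ⊥ with hVsel
  have hVselFG : ∀ n, (Vsel n).FG := by
    intro n
    by_cases hp : Pn n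
    · simp only [hVsel, dif_pos hp]
      exact hp.choose_spec.1
    · simp only [hVsel, dif_neg hp]
      exact Submodule.fg_bot
  have hVselC : ∀ n, Pn n → Cst (e n) (Vsel n) := by
    intro n hp
    simp only [hVsel, dif_pos hp]
    exact hp.choose_spec.2
  set ysel : ℕ → M := fun n => (sol_nonempty K φ x hgood _ (hVselFG n)).choose with hysel
  have hyselS : ∀ n, ysel n ∈ SolS K φ x (Vsel n) :=
    fun n => (sol_nonempty K φ x hgood _ (hVselFG n)).choose_spec
  have hfin : ∀ N, ∃ z, ∀ n ≤ N, Pn n → ∃ k ∈ K, z - ysel n = (e n) • k := by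
    intro N
    set VN : Submodule ℤ M := (Finset.range (N+1)).sup Vsel with hVN
    have hVNfg : VN.FG := by
      refine Finset.sup_induction Submodule.fg_bot (fun a ha b hb => ha.sup hb) ?_
      intro i _
      exact hVselFG i
    obtain ⟨z, hz⟩ := sol_nonempty K φ x hgood VN hVNfg
    refine ⟨z, fun n hn hp => ?_⟩
    have hle : Vsel n ≤ VN := Finset.le_sup (Finset.mem_range.2 (Nat.lt_succ_of_le hn))
    exact (hVselC n hp).1 (ysel n) (hyselS n) z (sol_anti K φ x hle hz)
  obtain ⟨zst, hzst⟩ := hcompact Pn (fun n => e n) ysel hfin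
  have hzS : ∀ V : Submodule ℤ M, V.FG → zst ∈ SolS K φ x V := by
    intro V hV
    obtain ⟨d, hdc⟩ := hCV V hV
    set n : ℕ := e.symm d with hn
    have hen : e n = d := e.apply_symm_apply d
    have hp : Pn n := ⟨V, hV, by rw [hen]; exact hdc⟩
    obtain ⟨k, hk, hkk⟩ := hzst n hp
    rw [hen] at hkk
    have hzsel : zst ∈ SolS K φ x (Vsel n) := by
      have hmem := (hVselC n hp).2 (ysel n) (hyselS n) k hk
      rw [hen] at hmem
      have hze : zst = ysel n + d • k := by rw [← hkk]; abel
      rw [hze]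
      exact hmem
    obtain ⟨y2, hy2⟩ := sol_nonempty K φ x hgood (V ⊔ Vsel n) (hV.sup (hVselFG n))
    have hy2V : y2 ∈ SolS K φ x V := sol_anti K φ x le_sup_left hy2
    have hy2V' : y2 ∈ SolS K φ x (Vsel n) := sol_anti K φ x le_sup_right hy2
    obtain ⟨k3, hk3, hkk3⟩ := (hVselC n hp).1 y2 hy2V' zst hzsel
    rw [hen] at hkk3
    have hmem := hdc.2 y2 hy2V k3 hk3
    have hze : zst = y2 + d • k3 := by rw [← hkk3]; abel
    rw [hze]
    exact hmem
  have hzstK : zst ∈ K := by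
    obtain ⟨ψ, h1, _, h3⟩ := hzS ⊥ Submodule.fg_bot
    rw [← h3]
    exact h1 _
  have hcompat : ∀ (n : ℤ) (hm : n • x ∈ φ.domain), φ ⟨n • x, hm⟩ = n • zst := by
    intro n hm
    obtain ⟨ψ, h1, h2, h3⟩ := hzS ⊥ Submodule.fg_bot
    have hxm : n • x ∈ Submodule.span ℤ {x} ⊔ (⊥ : Submodule ℤ M) :=
      Submodule.mem_sup_left (Submodule.smul_mem _ n (Submodule.mem_span_singleton_self x))
    have hv : (⟨n • x, hxm⟩ : ↥(Submodule.span ℤ {x} ⊔ (⊥ : Submodule ℤ M))) =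
        n • ⟨x, xMem x ⊥⟩ := Subtype.ext rfl
    have h4 := h2 ⟨n • x, hxm⟩ hm
    have h5 : ψ ⟨n • x, hxm⟩ = n • zst := by rw [hv, map_smul, h3]
    exact h4.symm.trans h5
  -- build the glued extension
  set C : Submodule ℤ M := φ.domain with hC
  set q : (↥C × ℤ) →ₗ[ℤ] M :=
    C.subtype.comp (LinearMap.fst ℤ ↥C ℤ) +
      (LinearMap.toSpanSingleton ℤ M x).comp (LinearMap.snd ℤ ↥C ℤ) with hqdef
  set ρ : (↥C × ℤ) →ₗ[ℤ] M :=
    φ.toFun.comp (LinearMap.fst ℤ ↥C ℤ) +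
      (LinearMap.toSpanSingleton ℤ M zst).comp (LinearMap.snd ℤ ↥C ℤ) with hρdef
  have hq_apply : ∀ p : ↥C × ℤ, q p = (p.1 : M) + p.2 • x := fun p => rfl
  have hρ_apply : ∀ p : ↥C × ℤ, ρ p = φ p.1 + p.2 • zst := fun p => rfl
  set Dom' : Submodule ℤ M := C ⊔ Submodule.span ℤ {x} with hDom'
  have hrange : LinearMap.range q = Dom' := by
    apply le_antisymm
    · rintro z ⟨p, rfl⟩
      rw [hq_apply]
      exact Submodule.add_mem _ (Submodule.mem_sup_left p.1.2)
        (Submodule.mem_sup_right (Submodule.smul_mem _ _ (Submodule.mem_span_singleton_self x)))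
    · rintro z hz
      obtain ⟨cc, hcc, s, hss, rfl⟩ := Submodule.mem_sup.1 hz
      obtain ⟨n, rfl⟩ := Submodule.mem_span_singleton.1 hss
      exact ⟨(⟨cc, hcc⟩, n), rfl⟩
  have hker : LinearMap.ker q ≤ LinearMap.ker ρ := by
    rintro p hp
    have hp0 : (p.1 : M) + p.2 • x = 0 := LinearMap.mem_ker.1 hp
    have hsm : p.2 • x = -(p.1 : M) :=
      eq_neg_of_add_eq_zero_left (by rw [add_comm]; exact hp0)
    have hmem : p.2 • x ∈ C := by rw [hsm]; exact C.neg_mem p.1.2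
    have hco := hcompat p.2 hmem
    have hcoe : (⟨p.2 • x, hmem⟩ : ↥C) = -p.1 := Subtype.ext hsm
    rw [hcoe] at hco
    show ρ p = 0
    rw [hρ_apply, ← hco]
    show φ.toFun p.1 + φ.toFun (-p.1) = 0
    rw [φ.toFun.map_neg, add_neg_cancel]
  set toF : ↥Dom' →ₗ[ℤ] M :=
    ((LinearMap.ker q).liftQ ρ hker) ∘ₗ
      ((LinearMap.quotKerEquivRange q).symm.toLinearMap ∘ₗ
        (LinearEquiv.ofEq Dom' (LinearMap.range q) hrange.symm).toLinearMap) with htoF0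
  have htoF : ∀ (cc : ↥C) (n : ℤ) (hm : (cc : M) + n • x ∈ Dom'),
      toF ⟨(cc : M) + n • x, hm⟩ = φ cc + n • zst := by
    intro cc n hm
    have hq1 : q (⟨cc, n⟩ : ↥C × ℤ) = (cc : M) + n • x := hq_apply _
    have h1 : (LinearEquiv.ofEq Dom' (LinearMap.range q) hrange.symm) ⟨(cc : M) + n • x, hm⟩ =
        ⟨q (⟨cc, n⟩ : ↥C × ℤ), LinearMap.mem_range_self q _⟩ := by
      apply Subtype.ext
      rw [LinearEquiv.coe_ofEq_apply]
      exact hq1.symm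
    have h2 : (LinearMap.quotKerEquivRange q).symm
        ⟨q (⟨cc, n⟩ : ↥C × ℤ), LinearMap.mem_range_self q _⟩ =
        Submodule.Quotient.mk (⟨cc, n⟩ : ↥C × ℤ) := by
      apply LinearMap.quotKerEquivRange_symm_apply_image
    show ((LinearMap.ker q).liftQ ρ hker)
        ((LinearMap.quotKerEquivRange q).symm
          ((LinearEquiv.ofEq Dom' (LinearMap.range q) hrange.symm) ⟨(cc : M) + n • x, hm⟩)) =
        φ cc + n • zst
    rw [h1, h2, Submodule.liftQ_apply, hρ_apply]
  set φ' : M →ₗ.[ℤ] M := ⟨Dom', toF⟩ with hφ'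
  have hφle : φ ≤ φ' := by
    refine ⟨le_sup_left, ?_⟩
    intro a b hab
    have hbm : ((a : M) + (0 : ℤ) • x) = (b : M) := by rw [zero_smul, add_zero]; exact hab
    have hmem : (a : M) + (0 : ℤ) • x ∈ Dom' := by rw [hbm]; exact b.2
    have h1 : toF ⟨(a : M) + (0 : ℤ) • x, hmem⟩ = φ a := by
      rw [htoF a 0 hmem, zero_smul, add_zero]
    have h2 : toF b = toF ⟨(a : M) + (0 : ℤ) • x, hmem⟩ :=
      congrArg (fun t : ↥Dom' => toF t) (Subtype.ext hbm.symm)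
    exact (h1.symm.trans h2.symm : (φ a : M) = toF b)
  refine ⟨φ', ⟨le_trans hKle le_sup_left, ?_, ?_, ?_⟩, hφle,
    Submodule.mem_sup_right (Submodule.mem_span_singleton_self x)⟩
  · -- values in K
    intro v
    obtain ⟨cc, hcc, s, hss, hsum⟩ := Submodule.mem_sup.1 v.2
    obtain ⟨n, rfl⟩ := Submodule.mem_span_singleton.1 hss
    have hmem : ((⟨cc, hcc⟩ : ↥C) : M) + n • x ∈ Dom' := by
      show cc + n • x ∈ Dom'
      rw [hsum]
      exact v.2
    have hveq : v = ⟨((⟨cc, hcc⟩ : ↥C) : M) + n • x, hmem⟩ := Subtype.ext hsum.symm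
    have hval : φ' v = φ ⟨cc, hcc⟩ + n • zst :=
      (congrArg (fun t : ↥Dom' => toF t) hveq).trans (htoF _ _ _)
    rw [hval]
    exact add_mem (hKval ⟨cc, hcc⟩) (Submodule.smul_mem _ _ hzstK)
  · -- identity on K
    intro v hvK
    have hvC : (v : M) ∈ C := hKle hvK
    have h1 : φ ⟨(v : M), hvC⟩ = φ' v := hφle.2 rfl
    rw [← h1]
    exact hKid ⟨(v : M), hvC⟩ hvK
  · -- goodness
    intro V hV
    obtain ⟨ψ, h1, h2, h3⟩ := hzS V hV
    refine ⟨ψ.comp (Submodule.inclusion (le_sup_right : V ≤ Submodule.span ℤ {x} ⊔ V)),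
      fun v => h1 _, ?_⟩
    intro v hv
    obtain ⟨cc, hcc, s, hss, hsum⟩ := Submodule.mem_sup.1 hv
    obtain ⟨n, rfl⟩ := Submodule.mem_span_singleton.1 hss
    have hmem : ((⟨cc, hcc⟩ : ↥C) : M) + n • x ∈ Dom' := by
      show cc + n • x ∈ Dom'
      rw [hsum]
      exact hv
    have hveq : (⟨(v : M), hv⟩ : ↥Dom') = ⟨((⟨cc, hcc⟩ : ↥C) : M) + n • x, hmem⟩ :=
      Subtype.ext hsum.symm
    have hRHS : φ' ⟨(v : M), hv⟩ = φ ⟨cc, hcc⟩ + n • zst :=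
      (congrArg (fun t : ↥Dom' => toF t) hveq).trans (htoF _ _ _)
    have hcmem : cc ∈ Submodule.span ℤ {x} ⊔ V := by
      have hccv : cc = (v : M) - n • x := by rw [← hsum]; abel
      rw [hccv]
      exact sub_mem (Submodule.mem_sup_right v.2)
        (Submodule.smul_mem _ _ (Submodule.mem_sup_left (Submodule.mem_span_singleton_self x)))
    have hsplit : Submodule.inclusion (le_sup_right : V ≤ Submodule.span ℤ {x} ⊔ V) v =
        ⟨cc, hcmem⟩ + n • (⟨x, xMem x V⟩ : ↥(Submodule.span ℤ {x} ⊔ V)) := by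
      apply Subtype.ext
      show (v : M) = cc + n • x
      exact hsum.symm
    show ψ (Submodule.inclusion _ v) = φ' ⟨(v : M), hv⟩
    rw [hsplit, map_add, map_smul, h3, h2 ⟨cc, hcmem⟩ hcc, hRHS]

theorem core_retraction (htf : ∀ (z : M) (n : ℤ), n ≠ 0 → n • z = 0 → z = 0)
    (hquo : ∀ (z : M) (n : ℤ), n ≠ 0 → n • z ∈ K → z ∈ K)
    (hcompact : ∀ (P : ℕ → Prop) (d : ℕ → ℤ) (y : ℕ → M),
      (∀ N, ∃ z, ∀ n ≤ N, P n → ∃ k ∈ K, z - y n = d n • k) →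
      ∃ z, ∀ n, P n → ∃ k ∈ K, z - y n = d n • k) :
    ∃ r : M →ₗ[ℤ] M, (∀ z, r z ∈ K) ∧ ∀ z ∈ K, r z = z := by
  obtain ⟨m, _, hmax⟩ := zorn_le_nonempty₀ (GoodSet K)
    (fun c hsub hchain y hy => chain_ub K c hsub hchain y hy) _ (base_mem K hquo)
  have hdom : m.domain = ⊤ := by
    by_contra hne
    obtain ⟨x, hx⟩ : ∃ x, x ∉ m.domain := by
      by_contra hall
      push_neg at hall
      exact hne (Submodule.eq_top_iff'.2 hall)
    obtain ⟨φ', hφ'mem, hle, hxmem⟩ := succ_step K htf hcompact m x hmax.1 hx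
    exact hx ((hmax.2 hφ'mem hle).1 hxmem)
  refine ⟨{ toFun := fun z => m ⟨z, hdom ▸ Submodule.mem_top⟩,
            map_add' := ?_, map_smul' := ?_ }, ?_, ?_⟩
  · intro a b
    exact m.toFun.map_add ⟨a, hdom ▸ Submodule.mem_top⟩ ⟨b, hdom ▸ Submodule.mem_top⟩
  · intro z a
    exact m.toFun.map_smul z ⟨a, hdom ▸ Submodule.mem_top⟩
  · intro z
    exact hmax.1.2.1 _
  · intro z hz
    exact hmax.1.2.2.1 _ hz

end SuccStep

section SplitExists

variable {B A : Type*} [AddCommGroup B] [AddCommGroup A]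

/-- Choice of representatives in the ultrapower. -/
noncomputable def repS {G : Type*} [AddCommGroup G] (β : UPow G) : ℕ → G :=
  (mkS_surjective β).choose

theorem repS_spec {G : Type*} [AddCommGroup G] (β : UPow G) : mkS (repS β) = β :=
  (mkS_surjective β).choose_spec

/-- The induced "cocycle" on the ultrapowers. -/
noncomputable def cstar (cc : Cocycle2 B A) (β γ : UPow B) : UPow A :=
  mkS (fun i => cc.f (repS β i) (repS γ i))

theorem cstar_mk (cc : Cocycle2 B A) (b b' : ℕ → B) :
    cstar cc (mkS b) (mkS b') = mkS (fun i => cc.f (b i) (b' i)) := by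
  apply mkS_eq_iff.2
  have h1 : ∀ᶠ i in (UF : Filter ℕ), repS (mkS b) i = b i :=
    mkS_eq_iff.1 (repS_spec (mkS b))
  have h2 : ∀ᶠ i in (UF : Filter ℕ), repS (mkS b') i = b' i :=
    mkS_eq_iff.1 (repS_spec (mkS b'))
  filter_upwards [h1, h2] with i hi1 hi2
  rw [hi1, hi2]


/-- Second component map on the ultrapower of the twisted extension. -/
noncomputable def sndS (h : Cocycle2 B A) (hs : ∀ x y, h.f x y = h.f y x)
    (x : UPow (TW h hs)) : UPow A := mkS (fun i => (repS x i).2)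

theorem sndS_mk (h : Cocycle2 B A) (hs : ∀ x y, h.f x y = h.f y x) (w : ℕ → TW h hs) :
    sndS h hs (mkS w) = mkS (fun i => (w i).2) := by
  apply mkS_eq_iff.2
  have h1 := mkS_eq_iff.1 (repS_spec (mkS w))
  filter_upwards [h1] with i hi
  rw [hi]

theorem split_exists (h : Cocycle2 B A) (hs : ∀ x y, h.f x y = h.f y x)
    (hA : AddMonoid.IsTorsionFree A) (hB : AddMonoid.IsTorsionFree B) :
    ∃ c : UPow B → UPow A, ∀ β γ, c (β + γ) = c β + c γ + cstar h β γ := by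
  obtain ⟨r, hrK, hrid⟩ := core_retraction (KK h hs) (SX_tf h hs hA hB)
    (KK_quot_tf h hs hB) (KK_compact h hs)
  have hsurj : Function.Surjective (piS h hs) := by
    intro β
    obtain ⟨b, rfl⟩ := mkS_surjective β
    exact ⟨mkS (fun i => ((b i, 0) : TW h hs)), rfl⟩
  set s : UPow B → UPow (TW h hs) := fun β => (hsurj β).choose - r ((hsurj β).choose) with hsdef
  have hpis : ∀ β, piS h hs (s β) = β := by
    intro β
    have h1 : piS h hs ((hsurj β).choose) = β := (hsurj β).choose_spec
    have h2 : r ((hsurj β).choose) ∈ KK h hs := hrK _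
    rw [mem_KK_iff] at h2
    rw [hsdef]
    simp only [map_sub, h1, h2, sub_zero]
  have hadd : ∀ β γ, s (β + γ) = s β + s γ := by
    intro β γ
    set xa := (hsurj (β + γ)).choose with hxa
    set xb := (hsurj β).choose with hxb
    set xc := (hsurj γ).choose with hxc
    have hka : piS h hs xa = β + γ := (hsurj (β + γ)).choose_spec
    have hkb : piS h hs xb = β := (hsurj β).choose_spec
    have hkc : piS h hs xc = γ := (hsurj γ).choose_spec
    set k := xa - xb - xc with hk
    have hkK : k ∈ KK h hs := by
      rw [mem_KK_iff, hk, map_sub, map_sub, hka, hkb, hkc]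
      abel
    have hrk : r k = k := hrid k hkK
    have hxaeq : xa = xb + xc + k := by rw [hk]; abel
    show xa - r xa = (xb - r xb) + (xc - r xc)
    rw [hxaeq, map_add, map_add, hrk]
    abel
  refine ⟨fun β => sndS h hs (s β), ?_⟩
  intro β γ
  show sndS h hs (s (β + γ)) = sndS h hs (s β) + sndS h hs (s γ) + cstar h β γ
  set w := repS (s β) with hw
  set w' := repS (s γ) with hw'
  have hwβ : mkS w = s β := repS_spec _
  have hwγ : mkS w' = s γ := repS_spec _
  have h1 : s (β + γ) = mkS (w + w') := by rw [hadd, ← hwβ, ← hwγ, map_add]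
  have h2 : sndS h hs (s (β + γ)) = mkS (fun i => (w i + w' i).2) := by
    rw [h1]
    exact sndS_mk h hs _
  have h3 : (fun i => (w i + w' i).2) =
      fun i => (w i).2 + (w' i).2 + h.f (w i).1 (w' i).1 := rfl
  have h4 : mkS (fun i => (w i).1) = β := by
    rw [show (fun i => (w i).1) = fun i => twFst h hs (w i) from rfl]
    rw [← starMap_mk (twFst h hs) w]
    show piS h hs (mkS w) = β
    rw [hwβ, hpis]
  have h5 : mkS (fun i => (w' i).1) = γ := by
    rw [show (fun i => (w' i).1) = fun i => twFst h hs (w' i) from rfl]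
    rw [← starMap_mk (twFst h hs) w']
    show piS h hs (mkS w') = γ
    rw [hwγ, hpis]
  have h6 : cstar h β γ = mkS (fun i => h.f (w i).1 (w' i).1) := by
    rw [← h4, ← h5, cstar_mk]
  rw [h2, h3, h6]
  have h7 : sndS h hs (s β) = mkS (fun i => (w i).2) := by rw [← hwβ]; exact sndS_mk h hs w
  have h8 : sndS h hs (s γ) = mkS (fun i => (w' i).2) := by rw [← hwγ]; exact sndS_mk h hs w'
  rw [h7, h8]
  rw [show (fun i => (w i).2 + (w' i).2 + h.f (w i).1 (w' i).1) =
    ((fun i => (w i).2) + (fun i => (w' i).2) + fun i => h.f (w i).1 (w' i).1 : ℕ → A) from rfl]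
  rw [map_add, map_add]

end SplitExists

section ModelTheorySection

open FirstOrder.Language FirstOrder.Language.Structure

variable {B A : Type*} [AddCommGroup B] [AddCommGroup A]

instance CExt.nonempty (c : Cocycle2 B A) : Nonempty (CExt c) := ⟨(1 : CExt c)⟩

/-- The ultrapower of a central extension, as a first-order structure. -/
abbrev EP (c : Cocycle2 B A) : Type _ := (UF : Filter ℕ).Product (fun _ : ℕ => CExt c)

/-- Projection to the ultraproduct. -/
noncomputable def mkP (c : Cocycle2 B A) (w : ℕ → CExt c) : EP c := (↑w : EP c)

theorem mkP_eq_iff {c : Cocycle2 B A} {w w' : ℕ → CExt c} :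
    mkP c w = mkP c w' ↔ ∀ᶠ i in (UF : Filter ℕ), w i = w' i :=
  ⟨fun h => Quotient.exact' h, fun h => Quotient.sound' h⟩

noncomputable def outP {c : Cocycle2 B A} (u : EP c) : ℕ → CExt c := Quotient.out u

theorem outP_spec {c : Cocycle2 B A} (u : EP c) : mkP c (outP u) = u := Quotient.out_eq' u

/-- First components of an element of the ultrapower of the extension. -/
noncomputable def bP {c : Cocycle2 B A} (u : EP c) : UPow B := mkS (fun i => (outP u i).1)

/-- Second components of an element of the ultrapower of the extension. -/
noncomputable def aP {c : Cocycle2 B A} (u : EP c) : UPow A := mkS (fun i => (outP u i).2)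

/-- Recombine a pair of classes into an element of the ultrapower of the extension. -/
noncomputable def combineP (c : Cocycle2 B A) (β : UPow B) (α : UPow A) : EP c :=
  mkP c (fun i => ((repS β i, repS α i) : CExt c))

theorem repS_ae {G : Type*} [AddCommGroup G] (β : UPow G) (b : ℕ → G) (hb : mkS b = β) :
    ∀ᶠ i in (UF : Filter ℕ), repS β i = b i :=
  mkS_eq_iff.1 ((repS_spec β).trans hb.symm)

theorem combineP_mk (c : Cocycle2 B A) (b : ℕ → B) (a : ℕ → A) :
    combineP c (mkS b) (mkS a) = mkP c (fun i => (b i, a i)) := by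
  apply mkP_eq_iff.2
  filter_upwards [repS_ae (mkS b) b rfl, repS_ae (mkS a) a rfl] with i h1 h2
  show ((repS (mkS b) i, repS (mkS a) i) : B × A) = (b i, a i)
  rw [h1, h2]

theorem bP_mk (c : Cocycle2 B A) (w : ℕ → CExt c) :
    bP (mkP c w) = mkS (fun i => (w i).1) := by
  apply mkS_eq_iff.2
  have h1 : ∀ᶠ i in (UF : Filter ℕ), outP (mkP c w) i = w i := mkP_eq_iff.1 (outP_spec _)
  filter_upwards [h1] with i hi
  rw [hi]

theorem aP_mk (c : Cocycle2 B A) (w : ℕ → CExt c) :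
    aP (mkP c w) = mkS (fun i => (w i).2) := by
  apply mkS_eq_iff.2
  have h1 : ∀ᶠ i in (UF : Filter ℕ), outP (mkP c w) i = w i := mkP_eq_iff.1 (outP_spec _)
  filter_upwards [h1] with i hi
  rw [hi]

theorem bP_combine (c : Cocycle2 B A) (β : UPow B) (α : UPow A) :
    bP (combineP c β α) = β := by
  rw [combineP]
  exact (bP_mk c _).trans (repS_spec β)

theorem aP_combine (c : Cocycle2 B A) (β : UPow B) (α : UPow A) :
    aP (combineP c β α) = α := by
  rw [combineP]
  exact (aP_mk c _).trans (repS_spec α)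

theorem recon {c : Cocycle2 B A} (u : EP c) : combineP c (bP u) (aP u) = u := by
  conv_rhs => rw [← outP_spec u]
  rw [bP, aP, combineP_mk]
  rfl

theorem funMap2_mk (c : Cocycle2 B A) (F : Lgrp.Functions 2) (w w' : ℕ → CExt c) :
    (funMap F ![mkP c w, mkP c w'] : EP c) = mkP c (fun i => w i * w' i) := by
  have h0 : ![mkP c w, mkP c w'] = fun i => ((![w, w'] i : ℕ → CExt c) : EP c) := by
    funext i
    fin_cases i <;> rfl
  rw [h0]
  exact (Ultraproduct.funMap_cast F _).trans rfl

theorem funMap1_mk (c : Cocycle2 B A) (F : Lgrp.Functions 1) (w : ℕ → CExt c) :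
    (funMap F ![mkP c w] : EP c) = mkP c (fun i => (w i)⁻¹) := by
  have h0 : ![mkP c w] = fun i => ((![w] i : ℕ → CExt c) : EP c) := by
    funext i
    fin_cases i <;> rfl
  rw [h0]
  exact (Ultraproduct.funMap_cast F _).trans rfl

theorem funMap0_mk (c : Cocycle2 B A) (F : Lgrp.Functions 0) (x : Fin 0 → EP c) :
    (funMap F x : EP c) = mkP c (fun _ => 1) := by
  have h0 : x = fun i : Fin 0 => (((fun _ : Fin 0 => (fun _ : ℕ => (1 : CExt c))) i) : EP c) := by
    funext i
    exact i.elim0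
  rw [h0]
  exact (Ultraproduct.funMap_cast F _).trans rfl

theorem mul_combine (c : Cocycle2 B A) (F : Lgrp.Functions 2) (β β' : UPow B)
    (α α' : UPow A) :
    (funMap F ![combineP c β α, combineP c β' α'] : EP c) =
      combineP c (β + β') (α + α' + cstar c β β') := by
  refine (funMap2_mk c F (fun i => ((repS β i, repS α i) : CExt c))
    (fun i => ((repS β' i, repS α' i) : CExt c))).trans ?_
  show mkP c _ = combineP c (β + β') (α + α' + cstar c β β')
  rw [combineP]
  apply mkP_eq_iff.2
  have e1 : mkS (fun i => repS β i + repS β' i) = β + β' := by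
    rw [show (fun i => repS β i + repS β' i) = repS β + repS β' from rfl, map_add,
      repS_spec, repS_spec]
  have e2 : mkS (fun i => repS α i + repS α' i + c.f (repS β i) (repS β' i)) =
      α + α' + cstar c β β' := by
    rw [show (fun i => repS α i + repS α' i + c.f (repS β i) (repS β' i)) =
      (repS α + repS α' + fun i => c.f (repS β i) (repS β' i) : ℕ → A) from rfl,
      map_add, map_add, repS_spec, repS_spec]
    rfl
  filter_upwards [repS_ae (β + β') _ e1, repS_ae (α + α' + cstar c β β') _ e2] with i h1 h2
  refine Prod.ext ?_ ?_
  · show repS β i + repS β' i = repS (β + β') i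
    rw [h1]
  · show repS α i + repS α' i + c.f (repS β i) (repS β' i) =
      repS (α + α' + cstar c β β') i
    rw [h2]

theorem inv_combine (c : Cocycle2 B A) (F : Lgrp.Functions 1) (β : UPow B) (α : UPow A) :
    (funMap F ![combineP c β α] : EP c) = combineP c (-β) (-α - cstar c β (-β)) := by
  refine (funMap1_mk c F (fun i => ((repS β i, repS α i) : CExt c))).trans ?_
  show mkP c _ = combineP c (-β) (-α - cstar c β (-β))
  rw [combineP]
  apply mkP_eq_iff.2
  have e1 : mkS (fun i => -repS β i) = -β := by
    rw [show (fun i => -repS β i) = -repS β from rfl, map_neg, repS_spec]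
  have e2 : mkS (fun i => -repS α i - c.f (repS β i) (-repS β i)) =
      -α - cstar c β (-β) := by
    have e3 : mkS (fun i => c.f (repS β i) (-repS β i)) = cstar c β (-β) := by
      have := cstar_mk c (repS β) (fun i => -repS β i)
      rw [repS_spec, e1] at this
      exact this.symm
    rw [show (fun i => -repS α i - c.f (repS β i) (-repS β i)) =
      (-repS α - fun i => c.f (repS β i) (-repS β i) : ℕ → A) from rfl,
      map_sub, map_neg, repS_spec, e3]
  filter_upwards [repS_ae (-β) _ e1, repS_ae (-α - cstar c β (-β)) _ e2] with i h1 h2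
  refine Prod.ext ?_ ?_
  · show -repS β i = repS (-β) i
    rw [h1]
  · show -repS α i - c.f (repS β i) (-repS β i) = repS (-α - cstar c β (-β)) i
    rw [h2]

theorem one_combine (c : Cocycle2 B A) (F : Lgrp.Functions 0) (x : Fin 0 → EP c) :
    (funMap F x : EP c) = combineP c 0 0 := by
  rw [funMap0_mk]
  have h1 : (0 : UPow B) = mkS 0 := (map_zero _).symm
  have h2 : (0 : UPow A) = mkS 0 := (map_zero _).symm
  rw [h1, h2, combineP_mk]
  rfl

theorem cstar_hco (f g : Cocycle2 B A) (β β' : UPow B) :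
    cstar (hco f g) β β' = cstar f β β' - cstar g β β' := by
  rw [cstar, cstar, cstar]
  rw [show (fun i => (hco f g).f (repS β i) (repS β' i)) =
    ((fun i => f.f (repS β i) (repS β' i)) - fun i => g.f (repS β i) (repS β' i) : ℕ → A)
    from rfl, map_sub]

theorem cstar_zero (c : Cocycle2 B A) : cstar c 0 0 = (0 : UPow A) := by
  have h1 : (0 : UPow B) = mkS 0 := (map_zero _).symm
  rw [h1, cstar_mk]
  rw [show (fun i => c.f ((0 : ℕ → B) i) ((0 : ℕ → B) i)) = (0 : ℕ → A) from
    funext fun i => c.zero_left 0, map_zero]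

end ModelTheorySection

section PhiSection

open FirstOrder.Language FirstOrder.Language.Structure

variable {B A : Type*} [AddCommGroup B] [AddCommGroup A]
variable (f g : Cocycle2 B A) (c : UPow B → UPow A)

/-- The isomorphism between the two ultrapowers, given a splitting `c`. -/
noncomputable def PhiF : EP f → EP g := fun u => combineP g (bP u) (aP u - c (bP u))

/-- The inverse isomorphism. -/
noncomputable def PsiF : EP g → EP f := fun u => combineP f (bP u) (aP u + c (bP u))

theorem Phi_combine (β : UPow B) (α : UPow A) :
    PhiF f g c (combineP f β α) = combineP g β (α - c β) := by
  show combineP g (bP (combineP f β α)) (aP (combineP f β α) - c (bP (combineP f β α))) = _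
  rw [bP_combine, aP_combine]

theorem Psi_combine (β : UPow B) (α : UPow A) :
    PsiF f g c (combineP g β α) = combineP f β (α + c β) := by
  show combineP f (bP (combineP g β α)) (aP (combineP g β α) + c (bP (combineP g β α))) = _
  rw [bP_combine, aP_combine]

theorem Phi_Psi (u : EP g) : PhiF f g c (PsiF f g c u) = u := by
  rw [show PsiF f g c u = combineP f (bP u) (aP u + c (bP u)) from rfl, Phi_combine,
    add_sub_cancel_right]
  exact recon u

theorem Psi_Phi (u : EP f) : PsiF f g c (PhiF f g c u) = u := by
  rw [show PhiF f g c u = combineP g (bP u) (aP u - c (bP u)) from rfl, Psi_combine,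
    sub_add_cancel]
  exact recon u

/-- The `Lgrp`-isomorphism between the two ultrapowers. -/
noncomputable def PhiEquiv (hc : ∀ β γ, c (β + γ) = c β + c γ + cstar (hco f g) β γ) :
    EP f ≃[Lgrp] EP g where
  toEquiv := ⟨PhiF f g c, PsiF f g c, fun u => Psi_Phi f g c u, fun u => Phi_Psi f g c u⟩
  map_fun' := by
    intro n F x
    have hc0 : c 0 = 0 := by
      have h := hc 0 0
      rw [add_zero, cstar_zero, add_zero] at h
      exact (add_left_cancel (a := c 0) (by rw [add_zero]; exact h)).symm
    cases n with
    | zero =>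
      show PhiF f g c (funMap F x) = funMap F fun i => PhiF f g c (x i)
      rw [one_combine f F x, one_combine g F _, Phi_combine, hc0, sub_zero]
    | succ n => cases n with
      | zero =>
        show PhiF f g c (funMap F x) = funMap F fun i => PhiF f g c (x i)
        have hx : x = ![x 0] := by funext i; fin_cases i; rfl
        have hx' : (fun i => PhiF f g c (x i)) = ![PhiF f g c (x 0)] := by
          funext i; fin_cases i; rfl
        rw [hx', hx]
        have h0 : x 0 = combineP f (bP (x 0)) (aP (x 0)) := (recon _).symm
        rw [h0, inv_combine f F, Phi_combine]
        simp only [Matrix.cons_val_zero, Matrix.cons_val_one, Matrix.head_cons]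
        rw [Phi_combine, inv_combine g F]
        refine congrArg (combineP g _) ?_
        set β := bP (x 0)
        set α := aP (x 0)
        have h2 : c β + c (-β) + (cstar f β (-β) - cstar g β (-β)) = 0 := by
          rw [← cstar_hco]
          have h := hc β (-β)
          rw [add_neg_cancel, hc0] at h
          exact h.symm
        have h2' : (c β + (cstar f β (-β) - cstar g β (-β))) + c (-β) = 0 := by
          rw [← h2]; abel
        have h5 : c (-β) = -(c β + (cstar f β (-β) - cstar g β (-β))) :=
          eq_neg_of_add_eq_zero_left (by rw [add_comm]; exact h2')
        rw [h5]
        abel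
      | succ n => cases n with
        | zero =>
          show PhiF f g c (funMap F x) = funMap F fun i => PhiF f g c (x i)
          have hx : x = ![x 0, x 1] := by funext i; fin_cases i <;> rfl
          have hx' : (fun i => PhiF f g c (x i)) = ![PhiF f g c (x 0), PhiF f g c (x 1)] := by
            funext i; fin_cases i <;> rfl
          rw [hx', hx]
          have h0 : x 0 = combineP f (bP (x 0)) (aP (x 0)) := (recon _).symm
          have h1 : x 1 = combineP f (bP (x 1)) (aP (x 1)) := (recon _).symm
          rw [h0, h1, mul_combine, Phi_combine]
          simp only [Matrix.cons_val_zero, Matrix.cons_val_one, Matrix.head_cons]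
          rw [Phi_combine, Phi_combine, mul_combine]
          refine congrArg (combineP g _) ?_
          rw [hc, cstar_hco]
          abel
        | succ n => exact (F : Empty).elim
  map_rel' := by
    intro n r x
    exact (r : Empty).elim

end PhiSection

theorem stmt_16' {B A : Type*} [AddCommGroup B] [AddCommGroup A]
    (hA : AddMonoid.IsTorsionFree A) (hB : AddMonoid.IsTorsionFree B)
    (f g : Cocycle2 B A)
    (hsym : ∀ x y : B, f.f x y - g.f x y = f.f y x - g.f y x) :
    CExt f ≅[Lgrp] CExt g := by
  obtain ⟨c, hc⟩ := split_exists (hco f g) (fun x y => hsym x y) hA hB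
  have e1 : CExt f ≅[Lgrp] EP f := by
    apply (FirstOrder.Language.elementarilyEquivalent_iff).2
    intro φ
    rw [FirstOrder.Language.Ultraproduct.sentence_realize]
    exact Filter.eventually_const.symm
  have e2 : CExt g ≅[Lgrp] EP g := by
    apply (FirstOrder.Language.elementarilyEquivalent_iff).2
    intro φ
    rw [FirstOrder.Language.Ultraproduct.sentence_realize]
    exact Filter.eventually_const.symm
  exact e1.trans ((FirstOrder.Language.StrongHomClass.elementarilyEquivalent
    (PhiEquiv f g c hc)).trans e2.symm)


/-- if `A` and `B` are torsion-free abelian groups and `f, g` are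
2-cocycles whose difference `f − g` is symmetric, then the central extensions
`E(f)` and `E(g)` of `A` by `B` are elementarily equivalent. -/
theorem stmt_16 (hA : AddMonoid.IsTorsionFree A) (hB : AddMonoid.IsTorsionFree B)
    (f g : Cocycle2 B A)
    (hsym : ∀ x y : B, f.f x y - g.f x y = f.f y x - g.f y x) :
    CExt f ≅[Lgrp] CExt g := by
  exact stmt_16' hA hB f g hsym
end
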